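/- arXiv:math/0510444 — 5 statements merged into one kernel-verified Lean document; each statement's English description precedes it below -/
import Mathlib

section
/- Let C_v be a complete and algebraically closed field with a nontrivial non-archimedean absolute value |·|_v, and let φ ∈ C_v[z] be a polynomial of degree d ≥ 2 with leading coefficient a_d ∈ C_v^×. Set ρ_v = |a_d|_v^{-1/(d-1)}, and let U_0 be the unique smallest disk containing the filled Julia set 𝔎_{φ,v}, a closed disk of radius r_v. Suppose r_v > ρ_v. Then the preimage φ^{-1}(U_0) is a disjoint union of closed disks V_1, …, V_m ⊆ U_0, where 2 ≤ m ≤ d, and moreover φ(V_i) = U_0 for each i = 1, …, m. -/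
open Polynomial

/-- Sequential completeness of a field with respect to an absolute value. -/
def SeqComplete {Cv : Type*} [Field Cv] (v : AbsoluteValue Cv ℝ) : Prop :=
  ∀ s : ℕ → Cv, (∀ ε : ℝ, 0 < ε → ∃ N : ℕ, ∀ m ≥ N, ∀ n ≥ N, v (s m - s n) < ε) →
    ∃ L : Cv, ∀ ε : ℝ, 0 < ε → ∃ N : ℕ, ∀ n ≥ N, v (s n - L) < ε

/-- `U` is a closed disk (of positive radius): `U = {x : |x - a| ≤ r}`. -/
def IsClosedDisk {Cv : Type*} [Field Cv] (v : AbsoluteValue Cv ℝ) (U : Set Cv) : Prop :=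
  ∃ (a : Cv) (r : ℝ), 0 < r ∧ U = {x : Cv | v (x - a) ≤ r}

/-- The filled Julia set of a polynomial `φ ∈ C_v[z]`: the set of points with
bounded forward orbit. -/
def filledJulia {Cv : Type*} [Field Cv] (v : AbsoluteValue Cv ℝ) (φ : Polynomial Cv) :
    Set Cv :=
  {x : Cv | ∃ B : ℝ, ∀ n : ℕ, v ((fun y => φ.eval y)^[n] x) ≤ B}


section ListAux
variable {α : Type*}

lemma list_map_prod_nonneg {l : List α} {f : α → ℝ} (h : ∀ γ ∈ l, 0 ≤ f γ) :
    0 ≤ (l.map f).prod := by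
  induction l with
  | nil => simp
  | cons γ l ih =>
    simp only [List.map_cons, List.prod_cons]
    exact mul_nonneg (h γ (by simp)) (ih fun x hx => h x (by simp [hx]))

lemma list_map_prod_pos {l : List α} {f : α → ℝ} (h : ∀ γ ∈ l, 0 < f γ) :
    0 < (l.map f).prod := by
  apply List.prod_pos
  intro x hx
  obtain ⟨γ, hγ, rfl⟩ := List.mem_map.1 hx
  exact h γ hγ

lemma list_map_prod_le {l : List α} {f h : α → ℝ} (h0 : ∀ γ ∈ l, 0 ≤ f γ)
    (hle : ∀ γ ∈ l, f γ ≤ h γ) : (l.map f).prod ≤ (l.map h).prod := by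
  induction l with
  | nil => simp
  | cons γ l ih =>
    simp only [List.map_cons, List.prod_cons]
    refine mul_le_mul (hle γ (by simp)) (ih (fun x hx => h0 x (by simp [hx]))
      (fun x hx => hle x (by simp [hx]))) (list_map_prod_nonneg fun x hx => h0 x (by simp [hx]))
      (le_trans (h0 γ (by simp)) (hle γ (by simp)))

lemma pow_le_list_map_prod {l : List α} {f : α → ℝ} {t : ℝ} (ht : 0 ≤ t)
    (h : ∀ γ ∈ l, t ≤ f γ) : t ^ l.length ≤ (l.map f).prod := by
  induction l with
  | nil => simp
  | cons γ l ih =>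
    simp only [List.map_cons, List.prod_cons, List.length_cons, pow_succ]
    rw [mul_comm (t ^ l.length) t]
    exact mul_le_mul (h γ (by simp)) (ih fun x hx => h x (by simp [hx]))
      (pow_nonneg ht _) (le_trans ht (h γ (by simp)))

end ListAux

section PiMax
variable {Cv : Type*} [Field Cv] (v : AbsoluteValue Cv ℝ)

/-- `∏_{γ ∈ l} max t |γ|`. -/
noncomputable def piMax (l : List Cv) (t : ℝ) : ℝ :=
  (l.map (fun γ => max t (v γ))).prod

lemma piMax_nonneg {l : List Cv} {t : ℝ} (ht : 0 ≤ t) : 0 ≤ piMax v l t :=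
  list_map_prod_nonneg fun γ _ => le_trans ht (le_max_left _ _)

lemma piMax_pos {l : List Cv} {t : ℝ} (ht : 0 < t) : 0 < piMax v l t :=
  list_map_prod_pos fun γ _ => lt_of_lt_of_le ht (le_max_left _ _)

lemma piMax_mono {l : List Cv} {s t : ℝ} (hs : 0 ≤ s) (hst : s ≤ t) :
    piMax v l s ≤ piMax v l t :=
  list_map_prod_le (fun γ _ => le_trans hs (le_max_left _ _))
    (fun γ _ => max_le_max hst le_rfl)

lemma piMax_continuous (l : List Cv) : Continuous (piMax v l) := by
  induction l with
  | nil =>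
    have : piMax v ([] : List Cv) = fun _ => 1 := by funext t; simp [piMax]
    rw [this]; exact continuous_const
  | cons γ l ih =>
    have : piMax v (γ :: l) = fun t => max t (v γ) * piMax v l t := by
      funext t; simp [piMax]
    rw [this]
    exact (continuous_id.max continuous_const).mul ih

lemma pow_le_piMax {l : List Cv} {t : ℝ} (ht : 0 ≤ t) : t ^ l.length ≤ piMax v l t :=
  pow_le_list_map_prod ht fun γ _ => le_max_left _ _

lemma piMax_strictMonoOn {l : List Cv} (h0 : (0 : Cv) ∈ l) {s t : ℝ} (hs : 0 ≤ s)
    (hst : s < t) : piMax v l s < piMax v l t := by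
  classical
  have hperm := List.perm_cons_erase h0
  have key : ∀ u : ℝ, 0 ≤ u → piMax v l u = u * piMax v (l.erase 0) u := by
    intro u hu
    have := (hperm.map (fun γ => max u (v γ))).prod_eq
    simp only [piMax, this, List.map_cons, List.prod_cons, map_zero, max_eq_left hu]
  rw [key s hs, key t (le_trans hs hst.le)]
  calc s * piMax v (l.erase 0) s ≤ s * piMax v (l.erase 0) t :=
        mul_le_mul_of_nonneg_left (piMax_mono v hs hst.le) hs
    _ < t * piMax v (l.erase 0) t :=
        mul_lt_mul_of_pos_right hst (piMax_pos v (lt_of_le_of_lt hs hst))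

lemma exists_piMax_eq {l : List Cv} (h0 : (0 : Cv) ∈ l) {R : ℝ} (hR : 0 < R) :
    ∃ t : ℝ, 0 < t ∧ piMax v l t = R ∧ t ^ l.length ≤ R := by
  set M : ℝ := max 1 R with hM
  have hM0 : (0:ℝ) ≤ M := le_trans zero_le_one (le_max_left _ _)
  have h1 : piMax v l 0 = 0 := by
    have : (0:ℝ) ∈ l.map (fun γ => max 0 (v γ)) := by
      refine List.mem_map.2 ⟨0, h0, ?_⟩
      simp
    simpa [piMax] using List.prod_eq_zero this
  have h2 : R ≤ piMax v l M := by
    have hl : l ≠ [] := by rintro rfl; simp at h0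
    have hlen : 1 ≤ l.length := List.length_pos_iff.2 hl
    calc R ≤ M := le_max_right _ _
      _ = M ^ 1 := (pow_one M).symm
      _ ≤ M ^ l.length := pow_le_pow_right₀ (le_max_left _ _) hlen
      _ ≤ piMax v l M := pow_le_piMax v hM0
  have hmem : R ∈ Set.Icc (piMax v l 0) (piMax v l M) := ⟨by rw [h1]; exact hR.le, h2⟩
  obtain ⟨t, ht, htR⟩ := intermediate_value_Icc hM0 ((piMax_continuous v l).continuousOn) hmem
  refine ⟨t, ?_, htR, ?_⟩
  · rcases lt_or_eq_of_le ht.1 with h | h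
    · exact h
    · exfalso; rw [← h] at htR; rw [← htR] at hR; rw [h1] at hR; exact lt_irrefl _ hR
  · calc t ^ l.length ≤ piMax v l t := pow_le_piMax v (ht.1)
      _ = R := htR

end PiMax
section Mrp
variable {Cv : Type*} [Field Cv] (v : AbsoluteValue Cv ℝ)

/-- The monic polynomial with roots `l`. -/
noncomputable def mrp (l : List Cv) : Polynomial Cv :=
  (l.map (fun γ => X - C γ)).prod

lemma mrp_nil : mrp ([] : List Cv) = 1 := by simp [mrp]

lemma mrp_cons (γ : Cv) (l : List Cv) : mrp (γ :: l) = (X - C γ) * mrp l := by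
  simp [mrp]

lemma mrp_coeff_zero' (γ : Cv) (u : Polynomial Cv) :
    ((X - C γ) * u).coeff 0 = -(γ * u.coeff 0) := by
  rw [Polynomial.mul_coeff_zero]
  simp [Polynomial.coeff_X_zero]

lemma mrp_coeff_succ' (γ : Cv) (u : Polynomial Cv) (k : ℕ) :
    ((X - C γ) * u).coeff (k + 1) = u.coeff k - γ * u.coeff (k + 1) := by
  rw [sub_mul, Polynomial.coeff_sub, Polynomial.coeff_X_mul, Polynomial.coeff_C_mul]

lemma v_sub_le (hna : IsNonarchimedean v) (x y : Cv) :
    v (x - y) ≤ max (v x) (v y) := by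
  have := hna x (-y)
  simpa [sub_eq_add_neg] using this

/-- Nonarchimedean "isoceles" equality. -/
lemma v_sub_eq_of_lt (hna : IsNonarchimedean v) {x y : Cv} (h : v y < v x) :
    v (x - y) = v x := by
  have h1 : v (x - y) ≤ v x := by
    have := v_sub_le v hna x y
    rwa [max_eq_left h.le] at this
  have h2 : v x ≤ max (v (x - y)) (v y) := by
    have := hna (x - y) y
    simpa using this
  refine le_antisymm h1 ?_
  rcases max_cases (v (x - y)) (v y) with ⟨he, _⟩ | ⟨he, _⟩
  · rw [he] at h2; exact h2
  · rw [he] at h2; exact absurd (lt_of_le_of_lt h2 h) (lt_irrefl _)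

/-- Upper bound: every Gauss-norm term of `mrp l` is at most `∏ max t |γ|`. -/
lemma mrp_coeff_le (hna : IsNonarchimedean v) (l : List Cv) {t : ℝ} (ht : 0 ≤ t) (k : ℕ) :
    v ((mrp l).coeff k) * t ^ k ≤ piMax v l t := by
  induction l generalizing k with
  | nil =>
    rcases k with _ | k
    · simp [mrp_nil, piMax]
    · rw [mrp_nil]
      have : (1 : Polynomial Cv).coeff (k+1) = 0 := by
        simp [Polynomial.coeff_one]
      rw [this]
      simp [piMax]
  | cons γ l ih =>
    have hpi : 0 ≤ piMax v l t := piMax_nonneg v ht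
    have hmax : piMax v (γ :: l) t = max t (v γ) * piMax v l t := by simp [piMax]
    rw [mrp_cons, hmax]
    rcases k with _ | k
    · rw [mrp_coeff_zero']
      simp only [pow_zero, mul_one, AbsoluteValue.map_neg, map_mul]
      have h1 : v ((mrp l).coeff 0) ≤ piMax v l t := by
        have := ih 0; simpa using this
      exact mul_le_mul (le_max_right _ _) h1 (v.nonneg _)
        (le_trans (v.nonneg _) (le_max_right _ _))
    · rw [mrp_coeff_succ']
      have hA : v ((mrp l).coeff k) * t ^ k ≤ piMax v l t := ih k
      have hB : v ((mrp l).coeff (k+1)) * t ^ (k+1) ≤ piMax v l t := ih (k+1)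
      have hsub := v_sub_le v hna ((mrp l).coeff k) (γ * (mrp l).coeff (k+1))
      have htk : (0:ℝ) ≤ t ^ (k+1) := pow_nonneg ht _
      calc v ((mrp l).coeff k - γ * (mrp l).coeff (k+1)) * t ^ (k+1)
          ≤ max (v ((mrp l).coeff k)) (v (γ * (mrp l).coeff (k+1))) * t ^ (k+1) :=
            mul_le_mul_of_nonneg_right hsub htk
        _ = max (v ((mrp l).coeff k) * t ^ (k+1)) (v (γ * (mrp l).coeff (k+1)) * t ^ (k+1)) :=
            (max_mul_of_nonneg _ _ htk)
        _ ≤ max t (v γ) * piMax v l t := by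
            apply max_le
            · calc v ((mrp l).coeff k) * t ^ (k+1)
                  = (v ((mrp l).coeff k) * t ^ k) * t := by ring
                _ ≤ piMax v l t * t := mul_le_mul_of_nonneg_right hA ht
                _ = t * piMax v l t := mul_comm _ _
                _ ≤ max t (v γ) * piMax v l t :=
                    mul_le_mul_of_nonneg_right (le_max_left _ _) hpi
            · calc v (γ * (mrp l).coeff (k+1)) * t ^ (k+1)
                  = v γ * (v ((mrp l).coeff (k+1)) * t ^ (k+1)) := by
                    rw [map_mul]; ring
                _ ≤ v γ * piMax v l t :=
                    mul_le_mul_of_nonneg_left hB (v.nonneg _)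
                _ ≤ max t (v γ) * piMax v l t :=
                    mul_le_mul_of_nonneg_right (le_max_right _ _) hpi

end Mrp
section Mrp2
variable {Cv : Type*} [Field Cv] (v : AbsoluteValue Cv ℝ)

lemma mrp_monic (l : List Cv) : (mrp l).Monic := by
  induction l with
  | nil => rw [mrp_nil]; exact monic_one
  | cons γ l ih => rw [mrp_cons]; exact (monic_X_sub_C γ).mul ih

lemma mrp_natDegree (l : List Cv) : (mrp l).natDegree = l.length := by
  induction l with
  | nil => simp [mrp_nil]
  | cons γ l ih =>
    rw [mrp_cons, (monic_X_sub_C γ).natDegree_mul (mrp_monic l), natDegree_X_sub_C, ih,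
      List.length_cons]
    omega

lemma exists_mrp_coeff_eq (hna : IsNonarchimedean v) (l : List Cv) {t : ℝ} (ht : 0 < t) :
    ∃ k, v ((mrp l).coeff k) * t ^ k = piMax v l t := by
  classical
  induction l with
  | nil => exact ⟨0, by simp [mrp_nil, piMax]⟩
  | cons γ l ih =>
    obtain ⟨k, hk⟩ := ih
    set u := mrp l with hu
    set P := piMax v l t with hP
    have hPpos : 0 < P := piMax_pos v ht
    have hmaxpi : piMax v (γ :: l) t = max t (v γ) * P := by simp [piMax, hP]
    have hub : ∀ j, v (u.coeff j) * t ^ j ≤ P := fun j => mrp_coeff_le v hna l ht.le j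
    have hbig0 : ∀ j, l.length < j → v (u.coeff j) * t ^ j = 0 := by
      intro j hj
      have : u.coeff j = 0 :=
        Polynomial.coeff_eq_zero_of_natDegree_lt (by rw [hu, mrp_natDegree]; exact hj)
      simp [this]
    set S : Finset ℕ := (Finset.range (l.length + 1)).filter
      (fun j => v (u.coeff j) * t ^ j = P) with hS
    have hkS : k ∈ S := by
      have hkle : k ≤ l.length := by
        by_contra hc
        push_neg at hc
        rw [hbig0 k hc] at hk
        exact absurd hk.symm (ne_of_gt hPpos)
      exact Finset.mem_filter.2 ⟨Finset.mem_range.2 (by omega), hk⟩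
    have hSne : S.Nonempty := ⟨k, hkS⟩
    have hSmem : ∀ j ∈ S, v (u.coeff j) * t ^ j = P := by
      intro j hj; exact (Finset.mem_filter.1 hj).2
    rcases le_or_gt (v γ) t with hγt | hγt
    · -- small root: use largest attaining index + 1
      obtain ⟨k0, hk0⟩ : ∃ k0, S.max' hSne = k0 := ⟨_, rfl⟩
      have hk0S : k0 ∈ S := hk0 ▸ S.max'_mem hSne
      have hstrict : v (u.coeff (k0+1)) * t ^ (k0+1) < P := by
        rcases le_or_gt (k0+1) l.length with hle | hgt
        · have hnotS : k0 + 1 ∉ S := fun hmem => by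
            have := S.le_max' _ hmem
            omega
          have hne : v (u.coeff (k0+1)) * t ^ (k0+1) ≠ P := by
            intro he
            exact hnotS (Finset.mem_filter.2 ⟨Finset.mem_range.2 (by omega), he⟩)
          exact lt_of_le_of_ne (hub _) hne
        · rw [hbig0 _ hgt]; exact hPpos
      have hx1 : v (u.coeff k0) * t ^ (k0+1) = P * t := by
        have := hSmem k0 hk0S
        rw [pow_succ, ← mul_assoc, this]
      have hx2 : v (γ * u.coeff (k0+1)) * t ^ (k0+1) < P * t := by
        rw [map_mul, mul_assoc]
        calc v γ * (v (u.coeff (k0+1)) * t ^ (k0+1)) ≤ t * (v (u.coeff (k0+1)) * t ^ (k0+1)) :=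
              mul_le_mul_of_nonneg_right hγt (by positivity)
          _ < t * P := by
              exact mul_lt_mul_of_pos_left hstrict ht
          _ = P * t := mul_comm _ _
      have hvlt : v (γ * u.coeff (k0+1)) < v (u.coeff k0) := by
        have htp : (0:ℝ) < t ^ (k0+1) := pow_pos ht _
        have := lt_of_lt_of_eq hx2 hx1.symm
        exact lt_of_mul_lt_mul_right this htp.le
      refine ⟨k0 + 1, ?_⟩
      rw [mrp_cons, mrp_coeff_succ', hmaxpi, ← hu]
      rw [v_sub_eq_of_lt v hna hvlt]
      rw [hx1, max_eq_left hγt, mul_comm P t]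
    · -- large root: use smallest attaining index
      obtain ⟨k0, hk0⟩ : ∃ k0, S.min' hSne = k0 := ⟨_, rfl⟩
      have hk0S : k0 ∈ S := hk0 ▸ S.min'_mem hSne
      rcases Nat.eq_zero_or_pos k0 with h0 | hpos
      · refine ⟨0, ?_⟩
        rw [mrp_cons, mrp_coeff_zero', hmaxpi, ← hu]
        have h00 : v (u.coeff 0) * t ^ 0 = P := by rw [← h0]; exact hSmem k0 hk0S
        simp only [AbsoluteValue.map_neg, map_mul, pow_zero, mul_one] at h00 ⊢
        rw [h00, max_eq_right hγt.le]
      · obtain ⟨j, rfl⟩ : ∃ j, k0 = j + 1 := ⟨k0 - 1, by omega⟩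
        have hjlt : v (u.coeff j) * t ^ j < P := by
          have hjle : j ≤ l.length := by
            have : j + 1 ≤ l.length := by
              have := Finset.mem_range.1 (Finset.mem_filter.1 hk0S).1
              omega
            omega
          have hnotS : j ∉ S := fun hmem => by
            have := S.min'_le _ hmem
            rw [hk0] at this
            omega
          have hne : v (u.coeff j) * t ^ j ≠ P := by
            intro he
            exact hnotS (Finset.mem_filter.2 ⟨Finset.mem_range.2 (by omega), he⟩)
          exact lt_of_le_of_ne (hub _) hne
        have hx2 : v (γ * u.coeff (j+1)) * t ^ (j+1) = v γ * P := by
          rw [map_mul, mul_assoc, hSmem _ hk0S]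
        have hx1 : v (u.coeff j) * t ^ (j+1) < v γ * P := by
          calc v (u.coeff j) * t ^ (j+1) = (v (u.coeff j) * t ^ j) * t := by ring
            _ < P * t := mul_lt_mul_of_pos_right hjlt ht
            _ = t * P := mul_comm _ _
            _ < v γ * P := mul_lt_mul_of_pos_right hγt hPpos
        have hvlt : v (u.coeff j) < v (γ * u.coeff (j+1)) := by
          have htp : (0:ℝ) < t ^ (j+1) := pow_pos ht _
          have := lt_of_lt_of_eq hx1 hx2.symm
          exact lt_of_mul_lt_mul_right this htp.le
        refine ⟨j + 1, ?_⟩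
        rw [mrp_cons, mrp_coeff_succ', hmaxpi, ← hu]
        rw [v.map_sub, v_sub_eq_of_lt v hna hvlt, hx2, max_eq_right hγt.le]

lemma mrp_coeff_lt (hna : IsNonarchimedean v) (l : List Cv) {t : ℝ} (ht : 0 < t)
    (hbig : ∀ γ ∈ l, t < v γ) (k : ℕ) (hk : k ≠ 0) :
    v ((mrp l).coeff k) * t ^ k < (l.map (fun γ => v γ)).prod := by
  induction l generalizing k with
  | nil =>
    obtain ⟨j, rfl⟩ : ∃ j, k = j + 1 := ⟨k - 1, by omega⟩
    rw [mrp_nil]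
    have : (1 : Polynomial Cv).coeff (j+1) = 0 := by simp [Polynomial.coeff_one]
    rw [this]
    simp
  | cons γ l ih =>
    have hγ : t < v γ := hbig γ (by simp)
    have hbl : ∀ x ∈ l, t < v x := fun x hx => hbig x (by simp [hx])
    set u := mrp l with hu
    set Pv := (l.map (fun γ => v γ)).prod with hPv
    have hPvpos : 0 < Pv := list_map_prod_pos fun x hx => lt_trans ht (hbl x hx)
    have hpieq : piMax v l t = Pv := by
      rw [piMax, hPv]
      congr 1
      exact List.map_congr_left fun x hx => max_eq_right (hbl x hx).le
    have hub : ∀ j, v (u.coeff j) * t ^ j ≤ Pv := by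
      intro j
      rw [← hpieq]
      exact mrp_coeff_le v hna l ht.le j
    obtain ⟨j, rfl⟩ : ∃ j, k = j + 1 := ⟨k - 1, by omega⟩
    have hprodcons : ((γ :: l).map (fun γ => v γ)).prod = v γ * Pv := by simp [hPv]
    rw [mrp_cons, mrp_coeff_succ', hprodcons, ← hu]
    calc v (u.coeff j - γ * u.coeff (j+1)) * t ^ (j+1)
        ≤ max (v (u.coeff j)) (v (γ * u.coeff (j+1))) * t ^ (j+1) :=
          mul_le_mul_of_nonneg_right (v_sub_le v hna _ _) (by positivity)
      _ = max (v (u.coeff j) * t ^ (j+1)) (v (γ * u.coeff (j+1)) * t ^ (j+1)) :=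
          max_mul_of_nonneg _ _ (by positivity)
      _ < v γ * Pv := by
          apply max_lt
          · calc v (u.coeff j) * t ^ (j+1) = (v (u.coeff j) * t ^ j) * t := by ring
              _ ≤ Pv * t := mul_le_mul_of_nonneg_right (hub j) ht.le
              _ = t * Pv := mul_comm _ _
              _ < v γ * Pv := mul_lt_mul_of_pos_right hγ hPvpos
          · calc v (γ * u.coeff (j+1)) * t ^ (j+1)
                = v γ * (v (u.coeff (j+1)) * t ^ (j+1)) := by rw [map_mul]; ring
              _ < v γ * Pv := mul_lt_mul_of_pos_left (ih hbl (j+1) (by omega))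
                    (lt_trans ht hγ)
end Mrp2
section SR
variable {Cv : Type*} [Field Cv] (v : AbsoluteValue Cv ℝ)

lemma v_mrp_coeff_zero (l : List Cv) :
    v ((mrp l).coeff 0) = (l.map (fun γ => v γ)).prod := by
  rw [Polynomial.coeff_zero_eq_eval_zero, mrp, eval_list_prod, List.map_map]
  rw [map_list_prod v, List.map_map]
  congr 1
  refine List.map_congr_left fun γ _ => ?_
  simp

/-- Smallest root bound: if some higher Gauss term dominates the constant term,
there is a root of absolute value at most `s`. -/
lemma exists_root_abs_le [IsAlgClosed Cv] (hna : IsNonarchimedean v)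
    {p : Polynomial Cv} (hp : p ≠ 0) {s : ℝ} (hs : 0 < s) {k : ℕ} (hk : k ≠ 0)
    (hbig : v (p.coeff 0) ≤ v (p.coeff k) * s ^ k) :
    ∃ y, p.eval y = 0 ∧ v y ≤ s := by
  set lr := p.roots.toList with hlr
  have h1 : p.roots = ↑lr := (Multiset.coe_toList _).symm
  have hfac : p = C p.leadingCoeff * mrp lr := by
    conv_lhs => rw [(IsAlgClosed.splits p).eq_prod_roots]
    rw [h1, Multiset.map_coe, Multiset.prod_coe, mrp]
  by_contra hcon
  push_neg at hcon
  have hall : ∀ y ∈ lr, s < v y := by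
    intro y hy
    have hyr : y ∈ p.roots := by rw [h1]; exact Multiset.mem_coe.2 hy
    exact hcon y (Polynomial.mem_roots'.1 hyr).2
  have hlc : 0 < v p.leadingCoeff := v.pos (Polynomial.leadingCoeff_ne_zero.2 hp)
  have hck : v (p.coeff k) = v p.leadingCoeff * v ((mrp lr).coeff k) := by
    conv_lhs => rw [hfac]
    rw [Polynomial.coeff_C_mul, map_mul]
  have hc0 : v (p.coeff 0) = v p.leadingCoeff * (lr.map (fun γ => v γ)).prod := by
    conv_lhs => rw [hfac]
    rw [Polynomial.coeff_C_mul, map_mul, v_mrp_coeff_zero]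
  have hchain : v (p.coeff k) * s ^ k < v (p.coeff 0) := by
    rw [hck, hc0, mul_assoc]
    exact mul_lt_mul_of_pos_left (mrp_coeff_lt v hna lr hs hall k hk) hlc
  exact absurd (lt_of_le_of_lt hbig hchain) (lt_irrefl _)

end SR

/-- Lemma 2.7: Let `C_v` be a complete, algebraically closed field with a
nontrivial non-archimedean absolute value, `φ ∈ C_v[z]` a polynomial of degree `d ≥ 2`
with leading coefficient `a_d`, and `ρ_v = |a_d|^{-1/(d-1)}`.  Let `U₀ = D̄(a, r)` be the
unique smallest disk containing the filled Julia set `𝔎_{φ,v}`, a closed disk of radius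
`r`, and suppose `r > ρ_v`.  Then `φ⁻¹(U₀)` is a disjoint union of closed disks
`V_1, …, V_m ⊆ U₀` with `2 ≤ m ≤ d`, and `φ(V_i) = U₀` for each `i`. -/
theorem preimage_of_smallest_disk_is_union_of_disks
    {Cv : Type*} [Field Cv] [IsAlgClosed Cv]
    (v : AbsoluteValue Cv ℝ)
    (hna : IsNonarchimedean v)
    (hnt : ∃ x : Cv, x ≠ 0 ∧ v x ≠ 1)
    (hcomp : SeqComplete v)
    (φ : Polynomial Cv) (d : ℕ) (hdeg : φ.natDegree = d) (hd : 2 ≤ d)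
    (a : Cv) (r : ℝ) (hr : 0 < r)
    -- `D̄(a, r)` contains the filled Julia set, and `r` is minimal such
    (hsub : filledJulia v φ ⊆ {x : Cv | v (x - a) ≤ r})
    (hmin : ∀ (b : Cv) (r' : ℝ), 0 < r' →
      filledJulia v φ ⊆ {x : Cv | v (x - b) ≤ r'} → r ≤ r')
    -- `r_v > ρ_v`
    (hrρ : (v φ.leadingCoeff) ^ (-(1 / ((d : ℝ) - 1))) < r) :
    ∃ m : ℕ, 2 ≤ m ∧ m ≤ d ∧
      ∃ V : Fin m → Set Cv,
        (∀ i, IsClosedDisk v (V i)) ∧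
        (∀ i, V i ⊆ {x : Cv | v (x - a) ≤ r}) ∧
        (∀ i j, i ≠ j → Disjoint (V i) (V j)) ∧
        ((fun x => φ.eval x) ⁻¹' {x : Cv | v (x - a) ≤ r} = ⋃ i, V i) ∧
        (∀ i, (fun x => φ.eval x) '' V i = {x : Cv | v (x - a) ≤ r}) := by
  classical
  -- basic data
  set A := φ.leadingCoeff with hA
  have hφne : φ ≠ 0 := by
    intro h
    rw [h, natDegree_zero] at hdeg
    omega
  have hAne : A ≠ 0 := Polynomial.leadingCoeff_ne_zero.2 hφne
  have hApos : 0 < v A := v.pos hAne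
  set ψ : Polynomial Cv := φ - C a with hψ
  have hψdeg : ψ.natDegree = d := by rw [hψ, natDegree_sub_C, hdeg]
  have hψne : ψ ≠ 0 := by
    intro h
    rw [h, natDegree_zero] at hψdeg
    omega
  have hψlc : ψ.leadingCoeff = A := by
    rw [Polynomial.leadingCoeff, hψdeg, hψ, Polynomial.coeff_sub, Polynomial.coeff_C,
      if_neg (by omega : ¬ d = 0), sub_zero, hA, Polynomial.leadingCoeff, hdeg]
  set l : List Cv := ψ.roots.toList with hl
  have hroots : ψ.roots = ↑l := (Multiset.coe_toList _).symm
  have hlen : l.length = d := by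
    rw [hl, Multiset.length_toList,
      Polynomial.splits_iff_card_roots.1 (IsAlgClosed.splits ψ), hψdeg]
  have hlne : l ≠ [] := by
    intro h
    rw [h] at hlen
    simp at hlen
    omega
  have hfac : ψ = C A * mrp l := by
    conv_lhs => rw [(IsAlgClosed.splits ψ).eq_prod_roots]
    rw [hψlc, hroots, Multiset.map_coe, Multiset.prod_coe, mrp]
  have heval : ∀ x, v (φ.eval x - a) = v A * (l.map (fun γ => v (x - γ))).prod := by
    intro x
    have h1 : φ.eval x - a = ψ.eval x := by simp [hψ]
    rw [h1]
    conv_lhs => rw [hfac]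
    rw [eval_mul, eval_C, map_mul, mrp, eval_list_prod, List.map_map, map_list_prod v,
      List.map_map]
    congr 2
    refine List.map_congr_left fun γ _ => ?_
    simp
  set R := r / v A with hR
  have hRpos : 0 < R := div_pos hr hApos
  have hvAR : v A * R = r := by
    rw [hR]
    field_simp
  -- R < r ^ d
  have hrd : R < r ^ d := by
    have h1 : (v A) ^ (-(1 / ((d:ℝ) - 1))) < r := hrρ
    have hd1 : ((d - 1 : ℕ) : ℝ) = (d:ℝ) - 1 := by
      push_cast [Nat.cast_sub (by omega : 1 ≤ d)]
      ring
    have h2 : ((v A) ^ (-(1 / ((d:ℝ) - 1)))) ^ (d - 1 : ℕ) < r ^ (d - 1 : ℕ) :=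
      pow_lt_pow_left₀ h1 (Real.rpow_nonneg (v.nonneg _) _) (by omega)
    have h3 : ((v A) ^ (-(1 / ((d:ℝ) - 1)))) ^ (d - 1 : ℕ) = (v A)⁻¹ := by
      rw [← Real.rpow_natCast ((v A) ^ (-(1 / ((d:ℝ) - 1)))) (d-1),
        ← Real.rpow_mul (v.nonneg _), hd1]
      have hne : ((d:ℝ) - 1) ≠ 0 := by
        have : (2:ℝ) ≤ (d:ℝ) := by exact_mod_cast hd
        intro h
        rw [sub_eq_zero] at h
        rw [h] at this
        norm_num at this
      have : -(1 / ((d:ℝ) - 1)) * ((d:ℝ) - 1) = -1 := by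
        field_simp
      rw [this, Real.rpow_neg_one]
    rw [h3] at h2
    calc R = r * (v A)⁻¹ := by rw [hR]; ring
      _ < r * r ^ (d - 1 : ℕ) := by
          exact mul_lt_mul_of_pos_left h2 hr
      _ = r ^ d := by
          rw [← pow_succ']
          congr 1
          omega
  -- the radii of the preimage disks
  have hex : ∀ β : Cv, ∃ t : ℝ, 0 < t ∧ t ^ d ≤ R ∧
      (β ∈ l → piMax v (l.map (fun γ => β - γ)) t = R) := by
    intro β
    by_cases hβ : β ∈ l
    · have h0 : (0 : Cv) ∈ l.map (fun γ => β - γ) := List.mem_map.2 ⟨β, hβ, sub_self β⟩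
      obtain ⟨t, ht, hteq, htle⟩ := exists_piMax_eq v h0 hRpos
      refine ⟨t, ht, ?_, fun _ => hteq⟩
      rwa [List.length_map, hlen] at htle
    · refine ⟨min 1 R, lt_min one_pos hRpos, ?_, fun h => absurd h hβ⟩
      calc (min 1 R) ^ d ≤ (min 1 R) ^ 1 :=
            pow_le_pow_of_le_one (lt_min one_pos hRpos).le (min_le_left _ _) (by omega)
        _ = min 1 R := pow_one _
        _ ≤ R := min_le_right _ _
  choose T hT using hex
  have hTpos : ∀ β, 0 < T β := fun β => (hT β).1
  have hTd : ∀ β, (T β) ^ d ≤ R := fun β => (hT β).2.1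
  have hpig : ∀ (β : Cv) (t : ℝ), piMax v (l.map (fun γ => β - γ)) t
      = (l.map (fun γ => max t (v (β - γ)))).prod := by
    intro β t
    rw [piMax, List.map_map]
    rfl
  have hTeq : ∀ β ∈ l, (l.map (fun γ => max (T β) (v (β - γ)))).prod = R := by
    intro β hβ
    rw [← hpig]
    exact (hT β).2.2 hβ
  have hgmono : ∀ β ∈ l, ∀ {s t : ℝ}, 0 ≤ s → s < t →
      (l.map (fun γ => max s (v (β - γ)))).prod
        < (l.map (fun γ => max t (v (β - γ)))).prod := by
    intro β hβ s t hs hst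
    have h0 : (0 : Cv) ∈ l.map (fun γ => β - γ) := List.mem_map.2 ⟨β, hβ, sub_self β⟩
    have := piMax_strictMonoOn v h0 hs hst
    rwa [hpig, hpig] at this
  -- membership characterization of the preimage
  have hmem1 : ∀ β ∈ l, ∀ x, v (x - β) ≤ T β → v (φ.eval x - a) ≤ r := by
    intro β hβ x hx
    rw [heval x, ← hvAR]
    refine mul_le_mul_of_nonneg_left ?_ (v.nonneg A)
    calc (l.map (fun γ => v (x - γ))).prod
        ≤ (l.map (fun γ => max (T β) (v (β - γ)))).prod := by
          refine list_map_prod_le (fun γ _ => v.nonneg _) (fun γ _ => ?_)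
          have hsplit : v (x - γ) ≤ max (v (x - β)) (v (β - γ)) := by
            have := hna (x - β) (β - γ)
            rwa [sub_add_sub_cancel] at this
          exact le_trans hsplit (max_le_max hx le_rfl)
      _ = R := hTeq β hβ
  have hmem2 : ∀ x, v (φ.eval x - a) ≤ r → ∃ β ∈ l, v (x - β) ≤ T β := by
    intro x hx
    have hfne : l.toFinset.Nonempty := by
      obtain ⟨γ, hγ⟩ := List.exists_mem_of_ne_nil l hlne
      exact ⟨γ, List.mem_toFinset.2 hγ⟩
    obtain ⟨β, hβmem, hβmin⟩ := Finset.exists_min_image l.toFinset (fun γ => v (x - γ)) hfne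
    have hβl : β ∈ l := List.mem_toFinset.1 hβmem
    have hmin' : ∀ γ ∈ l, v (x - β) ≤ v (x - γ) := fun γ hγ => hβmin γ (List.mem_toFinset.2 hγ)
    have hlow : (l.map (fun γ => max (v (x - β)) (v (β - γ)))).prod
        ≤ (l.map (fun γ => v (x - γ))).prod := by
      refine list_map_prod_le (fun γ _ => le_trans (v.nonneg _) (le_max_right _ _))
        (fun γ hγ => ?_)
      refine max_le (hmin' γ hγ) ?_
      have hsplit : v (β - γ) ≤ max (v (β - x)) (v (x - γ)) := by
        have := hna (β - x) (x - γ)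
        rwa [sub_add_sub_cancel] at this
      rw [v.map_sub β x] at hsplit
      rwa [max_eq_right (hmin' γ hγ)] at hsplit
    have hgle : (l.map (fun γ => max (v (x - β)) (v (β - γ)))).prod ≤ R := by
      refine le_trans hlow ?_
      have h6 : v A * (l.map (fun γ => v (x - γ))).prod ≤ v A * R := by
        rw [hvAR, ← heval x]
        exact hx
      exact le_of_mul_le_mul_left h6 hApos
    refine ⟨β, hβl, ?_⟩
    by_contra hgt
    push_neg at hgt
    have hmono := hgmono β hβl (hTpos β).le hgt
    rw [hTeq β hβl] at hmono
    exact absurd (lt_of_lt_of_le hmono hgle) (lt_irrefl _)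
  have hTlt : ∀ β, T β < r :=
    fun β => lt_of_pow_lt_pow_left₀ d hr.le (lt_of_le_of_lt (hTd β) hrd)
  -- fixed point
  have hfix : ∃ x0 : Cv, φ.eval x0 = x0 := by
    have hqdeg : (φ - X).natDegree = d := by
      rw [Polynomial.natDegree_sub_eq_left_of_natDegree_lt, hdeg]
      rw [natDegree_X, hdeg]
      omega
    have hqne0 : (φ - X).degree ≠ 0 := by
      have h1 : 0 < (φ - X).natDegree := by omega
      exact ne_of_gt (Polynomial.natDegree_pos_iff_degree_pos.1 h1)
    obtain ⟨x0, hx0⟩ := IsAlgClosed.exists_root (φ - X) hqne0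
    refine ⟨x0, ?_⟩
    have h7 : φ.eval x0 - x0 = 0 := by simpa [Polynomial.IsRoot] using hx0
    exact sub_eq_zero.1 h7
  obtain ⟨x0, hx0⟩ := hfix
  have hx0K : x0 ∈ filledJulia v φ := by
    refine ⟨v x0, fun n => ?_⟩
    rw [Function.iterate_fixed hx0 n]
  have hx0U : v (x0 - a) ≤ r := hsub hx0K
  have hKpre : ∀ x : Cv, φ.eval x ∈ filledJulia v φ → x ∈ filledJulia v φ := by
    rintro x ⟨B, hB⟩
    refine ⟨max (v x) B, fun n => ?_⟩
    cases n with
    | zero => simpa using le_max_left _ _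
    | succ n =>
        rw [Function.iterate_succ_apply]
        exact le_trans (hB n) (le_max_right _ _)
  have hKstep : ∀ x ∈ filledJulia v φ, φ.eval x ∈ filledJulia v φ := by
    rintro x ⟨B, hB⟩
    refine ⟨B, fun n => ?_⟩
    rw [← Function.iterate_succ_apply]
    exact hB (n + 1)
  -- surjectivity of each disk onto U₀
  have hsurj : ∀ β ∈ l, ∀ w : Cv, v (w - a) ≤ r →
      ∃ x, v (x - β) ≤ T β ∧ φ.eval x = w := by
    intro β hβ w hw
    set l' := l.map (fun γ => γ - β) with hl'
    have hcomp1 : ψ.comp (X + C β) = C A * mrp l' := by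
      conv_lhs => rw [hfac]
      rw [mul_comp, C_comp, mrp, list_prod_comp, List.map_map, mrp, hl', List.map_map]
      congr 2
      refine List.map_congr_left fun γ _ => ?_
      simp only [Function.comp_apply, sub_comp, X_comp, C_comp, Polynomial.C_sub]
      ring
    set p := ψ.comp (X + C β) - C (w - a) with hp
    have hφβ : φ.eval β = a := by
      have hβr : β ∈ ψ.roots := by
        rw [hroots]
        exact Multiset.mem_coe.2 hβ
      have h2 := (Polynomial.mem_roots'.1 hβr).2
      have h3 : φ.eval β - a = 0 := by simpa [hψ, Polynomial.IsRoot] using h2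
      exact sub_eq_zero.1 h3
    have hpeval : ∀ y, p.eval y = φ.eval (y + β) - w := by
      intro y
      rw [hp, eval_sub, eval_C, eval_comp]
      simp only [eval_add, eval_X, eval_C, hψ, eval_sub]
      ring
    have hpc0 : v (p.coeff 0) = v (w - a) := by
      rw [Polynomial.coeff_zero_eq_eval_zero, hpeval 0, zero_add, hφβ, v.map_sub]
    have hpck : ∀ k, k ≠ 0 → p.coeff k = A * (mrp l').coeff k := by
      intro k hk
      rw [hp, Polynomial.coeff_sub, Polynomial.coeff_C, if_neg hk, sub_zero, hcomp1,
        Polynomial.coeff_C_mul]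
    obtain ⟨k, hkeq⟩ := exists_mrp_coeff_eq v hna l' (hTpos β)
    have hpiR : piMax v l' (T β) = R := by
      rw [← hTeq β hβ, piMax, hl', List.map_map]
      refine congrArg _ (List.map_congr_left fun γ _ => ?_)
      simp only [Function.comp_apply]
      rw [v.map_sub]
    have hk0 : k ≠ 0 := by
      intro h0
      rw [h0, pow_zero, mul_one, v_mrp_coeff_zero, hpiR] at hkeq
      have hzero : (0 : Cv) ∈ l' := by
        rw [hl']
        exact List.mem_map.2 ⟨β, hβ, sub_self β⟩
      have hz : (0:ℝ) ∈ l'.map (fun γ => v γ) := List.mem_map.2 ⟨0, hzero, map_zero v⟩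
      rw [List.prod_eq_zero hz] at hkeq
      exact absurd hkeq.symm (ne_of_gt hRpos)
    have hvpk : v (p.coeff k) * (T β) ^ k = r := by
      rw [hpck k hk0, map_mul, mul_assoc, hkeq, hpiR, hvAR]
    have hbig : v (p.coeff 0) ≤ v (p.coeff k) * (T β) ^ k := by
      rw [hpc0, hvpk]
      exact hw
    have hpne : p ≠ 0 := by
      intro h
      rw [h, Polynomial.coeff_zero, map_zero, zero_mul] at hvpk
      exact absurd hvpk (ne_of_lt hr)
    obtain ⟨y, hy0, hyle⟩ := exists_root_abs_le v hna hpne (hTpos β) hk0 hbig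
    refine ⟨y + β, by simpa using hyle, ?_⟩
    have h5 := hpeval y
    rw [hy0] at h5
    exact sub_eq_zero.1 h5.symm
  -- the disks
  set Dset : Cv → Set Cv := fun β => {x : Cv | v (x - β) ≤ T β} with hD
  have hmemD : ∀ β x, x ∈ Dset β ↔ v (x - β) ≤ T β := fun β x => Iff.rfl
  have himg : ∀ β ∈ l, (fun x => φ.eval x) '' Dset β = {x : Cv | v (x - a) ≤ r} := by
    intro β hβ
    apply Set.eq_of_subset_of_subset
    · rintro w ⟨x, hx, rfl⟩
      exact hmem1 β hβ x ((hmemD β x).1 hx)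
    · intro w hw
      obtain ⟨x, hx1, hx2⟩ := hsurj β hβ w hw
      exact ⟨x, (hmemD β x).2 hx1, hx2⟩
  have hsubU : ∀ β ∈ l, Dset β ⊆ {x : Cv | v (x - a) ≤ r} := by
    intro β hβ
    obtain ⟨y, hy1, hy2⟩ := hsurj β hβ x0 hx0U
    have hyK : y ∈ filledJulia v φ := hKpre y (by rw [hy2]; exact hx0K)
    have hyU : v (y - a) ≤ r := hsub hyK
    have hβa : v (β - a) ≤ r := by
      have hsplit : v (β - a) ≤ max (v (β - y)) (v (y - a)) := by
        have := hna (β - y) (y - a)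
        rwa [sub_add_sub_cancel] at this
      refine le_trans hsplit (max_le ?_ hyU)
      rw [v.map_sub]
      exact le_trans hy1 (hTlt β).le
    intro x hx
    have hx' : v (x - β) ≤ T β := (hmemD β x).1 hx
    have hsplit : v (x - a) ≤ max (v (x - β)) (v (β - a)) := by
      have := hna (x - β) (β - a)
      rwa [sub_add_sub_cancel] at this
    exact le_trans hsplit (max_le (le_trans hx' (hTlt β).le) hβa)
  -- equal or disjoint
  have hkey : ∀ β ∈ l, ∀ β' ∈ l, T β ≤ T β' → (Dset β ∩ Dset β').Nonempty →
      Dset β = Dset β' := by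
    intro β hβ β' hβ' hle ⟨x, hx1, hx2⟩
    have hββ' : v (β - β') ≤ T β' := by
      have hsplit : v (β - β') ≤ max (v (β - x)) (v (x - β')) := by
        have := hna (β - x) (x - β')
        rwa [sub_add_sub_cancel] at this
      refine le_trans hsplit (max_le ?_ ((hmemD β' x).1 hx2))
      rw [v.map_sub]
      exact le_trans ((hmemD β x).1 hx1) hle
    have hgle : (l.map (fun γ => max (T β') (v (β - γ)))).prod
        ≤ (l.map (fun γ => max (T β') (v (β' - γ)))).prod := by
      refine list_map_prod_le (fun γ _ => le_trans (hTpos β').le (le_max_left _ _))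
        (fun γ _ => ?_)
      refine max_le (le_max_left _ _) ?_
      have hsplit : v (β - γ) ≤ max (v (β - β')) (v (β' - γ)) := by
        have := hna (β - β') (β' - γ)
        rwa [sub_add_sub_cancel] at this
      exact le_trans hsplit (max_le (le_trans hββ' (le_max_left _ _)) (le_max_right _ _))
    have hTeq2 : T β = T β' := by
      by_contra hne
      have hlt : T β < T β' := lt_of_le_of_ne hle hne
      have hmono := hgmono β hβ (hTpos β).le hlt
      rw [hTeq β hβ] at hmono
      rw [hTeq β' hβ'] at hgle
      exact absurd (lt_of_lt_of_le hmono hgle) (lt_irrefl _)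
    ext x'
    rw [hmemD, hmemD]
    constructor
    · intro h
      have hsplit : v (x' - β') ≤ max (v (x' - β)) (v (β - β')) := by
        have := hna (x' - β) (β - β')
        rwa [sub_add_sub_cancel] at this
      exact le_trans hsplit (max_le (le_trans h hle) hββ')
    · intro h
      have hsplit : v (x' - β) ≤ max (v (x' - β')) (v (β' - β)) := by
        have := hna (x' - β') (β' - β)
        rwa [sub_add_sub_cancel] at this
      rw [hTeq2]
      refine le_trans hsplit (max_le h ?_)
      rw [v.map_sub]
      exact hββ'
  have hDeq : ∀ β ∈ l, ∀ β' ∈ l, Dset β = Dset β' ∨ Disjoint (Dset β) (Dset β') := by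
    intro β hβ β' hβ'
    by_cases hdis : Disjoint (Dset β) (Dset β')
    · exact Or.inr hdis
    · left
      have hne := Set.not_disjoint_iff_nonempty_inter.1 hdis
      rcases le_total (T β) (T β') with h | h
      · exact hkey β hβ β' hβ' h hne
      · exact (hkey β' hβ' β hβ h (by rwa [Set.inter_comm] at hne)).symm
  -- the collection of distinct disks
  set S : Finset (Set Cv) := l.toFinset.image Dset with hS
  have hScard_le : S.card ≤ d :=
    le_trans Finset.card_image_le (le_trans (List.toFinset_card_le l) (le_of_eq hlen))
  obtain ⟨β1, hβ1⟩ := List.exists_mem_of_ne_nil l hlne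
  have hSne : S.Nonempty := ⟨Dset β1, Finset.mem_image.2 ⟨β1, List.mem_toFinset.2 hβ1, rfl⟩⟩
  have hcard2 : 2 ≤ S.card := by
    by_contra hc
    push_neg at hc
    have h1 : S.card = 1 := by
      have := Finset.card_pos.2 hSne
      omega
    obtain ⟨s0, hs0⟩ := Finset.card_eq_one.1 h1
    have hall : ∀ β ∈ l, Dset β = s0 := by
      intro β hβ
      have hm : Dset β ∈ S := Finset.mem_image.2 ⟨β, List.mem_toFinset.2 hβ, rfl⟩
      rw [hs0] at hm
      exact Finset.mem_singleton.1 hm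
    have hKsub : filledJulia v φ ⊆ {x : Cv | v (x - β1) ≤ T β1} := by
      intro x hxK
      have h2 : v (φ.eval x - a) ≤ r := hsub (hKstep x hxK)
      obtain ⟨β, hβ, hxβ⟩ := hmem2 x h2
      have heq : Dset β = Dset β1 := by rw [hall β hβ, hall β1 hβ1]
      have hxD : x ∈ Dset β := (hmemD β x).2 hxβ
      rw [heq] at hxD
      exact (hmemD β1 x).1 hxD
    have := hmin β1 (T β1) (hTpos β1) hKsub
    exact absurd (lt_of_le_of_lt this (hTlt β1)) (lt_irrefl _)
  -- assemble
  refine ⟨S.card, hcard2, hScard_le, ?_⟩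
  have hmemS : ∀ i : Fin S.card, ∃ β ∈ l, ((S.equivFin.symm i : S) : Set Cv) = Dset β := by
    intro i
    have hm := (S.equivFin.symm i).2
    obtain ⟨β, hβ, hβeq⟩ := Finset.mem_image.1 hm
    exact ⟨β, List.mem_toFinset.1 hβ, hβeq.symm⟩
  refine ⟨fun i => ((S.equivFin.symm i : S) : Set Cv), ?_, ?_, ?_, ?_, ?_⟩
  · intro i
    obtain ⟨β, hβ, hβeq⟩ := hmemS i
    show IsClosedDisk v ((S.equivFin.symm i : S) : Set Cv)
    rw [hβeq]
    exact ⟨β, T β, hTpos β, rfl⟩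
  · intro i
    obtain ⟨β, hβ, hβeq⟩ := hmemS i
    show ((S.equivFin.symm i : S) : Set Cv) ⊆ _
    rw [hβeq]
    exact hsubU β hβ
  · intro i j hij
    obtain ⟨β, hβ, hβeq⟩ := hmemS i
    obtain ⟨β', hβ', hβeq'⟩ := hmemS j
    show Disjoint ((S.equivFin.symm i : S) : Set Cv) ((S.equivFin.symm j : S) : Set Cv)
    rw [hβeq, hβeq']
    rcases hDeq β hβ β' hβ' with heq | hdis
    · exfalso
      apply hij
      have h1 : ((S.equivFin.symm i : S) : Set Cv) = ((S.equivFin.symm j : S) : Set Cv) := by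
        rw [hβeq, hβeq', heq]
      have h2 : (S.equivFin.symm i) = (S.equivFin.symm j) := Subtype.coe_injective h1
      exact S.equivFin.symm.injective.eq_iff.1 h2
    · exact hdis
  · ext x
    simp only [Set.mem_preimage, Set.mem_setOf_eq, Set.mem_iUnion]
    constructor
    · intro hx
      obtain ⟨β, hβ, hxβ⟩ := hmem2 x hx
      have hm : Dset β ∈ S := Finset.mem_image.2 ⟨β, List.mem_toFinset.2 hβ, rfl⟩
      refine ⟨S.equivFin ⟨Dset β, hm⟩, ?_⟩
      rw [Equiv.symm_apply_apply]
      exact (hmemD β x).2 hxβ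
    · rintro ⟨i, hxi⟩
      obtain ⟨β, hβ, hβeq⟩ := hmemS i
      have hxi' : x ∈ Dset β := by
        rw [← hβeq]
        exact hxi
      exact hmem1 β hβ x ((hmemD β x).1 hxi')
  · intro i
    obtain ⟨β, hβ, hβeq⟩ := hmemS i
    show (fun x => φ.eval x) '' ((S.equivFin.symm i : S) : Set Cv) = _
    rw [hβeq]
    exact himg β hβ
end

section
/- Let C_v be a complete and algebraically closed field with a nontrivial non-archimedean absolute value |·|_v, and let φ ∈ C_v[z] be a polynomial of degree d ≥ 2 with leading coefficient a_d ∈ C_v^×. Set ρ_v = |a_d|_v^{-1/(d-1)}, and let r_v be the radius of the unique smallest disk containing the filled Julia set 𝔎_{φ,v}. Suppose r_v > ρ_v. Let z_0 be any point of 𝔎_{φ,v}, and let X = φ^{-2}(z_0) (a set of at most d^2 points). Then 𝔎_{φ,v} ⊆ ⋃_{x ∈ X} D(x, ρ_v). -/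
open Polynomial

private lemma prod_ge_pow (ρ : ℝ) (hρ : 0 ≤ ρ) :
    ∀ s : Multiset ℝ, (∀ u ∈ s, ρ ≤ u) → ρ ^ Multiset.card s ≤ s.prod := by
  intro s
  induction s using Multiset.induction with
  | empty => simp
  | cons a s ih =>
    intro h
    have ha := h a (Multiset.mem_cons_self a s)
    have hs := ih fun u hu => h u (Multiset.mem_cons_of_mem hu)
    rw [Multiset.prod_cons, Multiset.card_cons, pow_succ']
    exact mul_le_mul ha hs (pow_nonneg hρ _) (hρ.trans ha)

private lemma prod_gt_pow (ρ : ℝ) (hρ : 0 ≤ ρ) :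
    ∀ s : Multiset ℝ, (∀ u ∈ s, ρ < u) → s ≠ 0 → ρ ^ Multiset.card s < s.prod := by
  intro s
  induction s using Multiset.induction with
  | empty => intro _ h0; exact absurd rfl h0
  | cons a s ih =>
    intro h _
    have ha := h a (Multiset.mem_cons_self a s)
    rw [Multiset.prod_cons, Multiset.card_cons, pow_succ']
    rcases eq_or_ne s 0 with rfl | hs0
    · simpa using ha
    · have hs := ih (fun u hu => h u (Multiset.mem_cons_of_mem hu)) hs0
      exact mul_lt_mul'' ha hs hρ (pow_nonneg hρ _)

private lemma filledJulia_fwd {Cv : Type*} [Field Cv] (v : AbsoluteValue Cv ℝ)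
    (φ : Polynomial Cv) {x : Cv} (hx : x ∈ filledJulia v φ) :
    φ.eval x ∈ filledJulia v φ := by
  obtain ⟨B, hB⟩ := hx
  refine ⟨B, fun n => ?_⟩
  have h : (fun y => φ.eval y)^[n] (φ.eval x) = (fun y => φ.eval y)^[n + 1] x := by
    rw [Function.iterate_succ_apply]
  rw [h]; exact hB (n + 1)

private lemma filledJulia_bwd {Cv : Type*} [Field Cv] (v : AbsoluteValue Cv ℝ)
    (φ : Polynomial Cv) {x : Cv} (hx : φ.eval x ∈ filledJulia v φ) :
    x ∈ filledJulia v φ := by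
  obtain ⟨B, hB⟩ := hx
  refine ⟨max B (v x), fun n => ?_⟩
  cases n with
  | zero => simpa using le_max_right _ _
  | succ m =>
    have h : (fun y => φ.eval y)^[m + 1] x = (fun y => φ.eval y)^[m] (φ.eval x) := by
      rw [Function.iterate_succ_apply]
    rw [h]
    exact (hB m).trans (le_max_left _ _)

private lemma dist_le_of_mem {Cv : Type*} [Field Cv] (v : AbsoluteValue Cv ℝ)
    (hna : IsNonarchimedean v) {a : Cv} {r : ℝ} {K : Set Cv}
    (hsub : K ⊆ {x | v (x - a) ≤ r}) {x y : Cv} (hx : x ∈ K) (hy : y ∈ K) :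
    v (x - y) ≤ r := by
  have h1 : x - y = (x - a) + -(y - a) := by ring
  calc v (x - y) ≤ max (v (x - a)) (v (-(y - a))) := by rw [h1]; exact hna _ _
    _ ≤ r := by rw [v.map_neg]; exact max_le (hsub hx) (hsub hy)

private lemma na_add_eq {Cv : Type*} [Field Cv] (v : AbsoluteValue Cv ℝ)
    (hna : IsNonarchimedean v) {a b : Cv} (h : v b < v a) : v (a + b) = v a := by
  refine le_antisymm ((hna a b).trans (max_le le_rfl h.le)) ?_
  have h3 : v a ≤ max (v (a + b)) (v b) := by
    have h4 := hna (a + b) (-b)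
    rw [add_neg_cancel_right, v.map_neg] at h4
    exact h4
  rcases le_max_iff.mp h3 with h4 | h4
  · exact h4
  · exact absurd h4 (not_le.mpr h)

private lemma roots_data {Cv : Type*} [Field Cv] [IsAlgClosed Cv]
    (v : AbsoluteValue Cv ℝ) (φ : Polynomial Cv) (d : ℕ) (hdeg : φ.natDegree = d)
    (hd : 2 ≤ d) (w : Cv) :
    Multiset.card (φ - C w).roots = d ∧
    (∀ t ∈ (φ - C w).roots, φ.eval t = w) ∧
    ∀ x : Cv, v (φ.eval x - w) =
      v φ.leadingCoeff *
        (Multiset.map (fun t => v (x - t)) (φ - C w).roots).prod := by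
  have hpdeg : (φ - C w).natDegree = d := by rw [natDegree_sub_C, hdeg]
  have hpne : φ - C w ≠ 0 := fun h => by rw [h, natDegree_zero] at hpdeg; omega
  have hsp : (φ - C w).Splits := IsAlgClosed.splits _
  have hcard : Multiset.card (φ - C w).roots = d := by
    rw [splits_iff_card_roots.mp hsp, hpdeg]
  have hlc : (φ - C w).leadingCoeff = φ.leadingCoeff := by
    have h1 : φ - C w = -C w + φ := by ring
    rw [h1]
    apply leadingCoeff_add_of_degree_lt
    calc (-C w).degree ≤ 0 := by rw [degree_neg]; exact degree_C_le
      _ < φ.degree := by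
          apply natDegree_pos_iff_degree_pos.mp; omega
  have hfac := hsp.eq_prod_roots
  refine ⟨hcard, ?_, ?_⟩
  · intro t ht
    have h1 : (φ - C w).IsRoot t := isRoot_of_mem_roots ht
    have h2 : φ.eval t - w = 0 := by simpa [IsRoot] using h1
    exact sub_eq_zero.mp h2
  · intro x
    have h1 : φ.eval x - w = (φ - C w).eval x := by simp
    rw [h1]
    conv_lhs => rw [hfac]
    rw [eval_mul, eval_C, map_mul, hlc, eval_multiset_prod, Multiset.map_map,
      map_multiset_prod, Multiset.map_map]
    congr 2
    apply Multiset.map_congr rfl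
    intro t ht
    simp
/-- Lemma 2.8: Let `C_v` be a complete, algebraically closed field with a
nontrivial non-archimedean absolute value, `φ ∈ C_v[z]` a polynomial of degree `d ≥ 2`
with leading coefficient `a_d`, and `ρ_v = |a_d|^{-1/(d-1)}`.  Let `r_v` be the radius of
the unique smallest disk containing the filled Julia set `𝔎_{φ,v}`, and suppose
`r_v > ρ_v`.  Let `z₀ ∈ 𝔎_{φ,v}` and `X = φ^{-2}(z₀)`, a set of at most `d²` points.
Then `𝔎_{φ,v} ⊆ ⋃_{x ∈ X} D(x, ρ_v)`. -/
theorem filledJulia_subset_union_of_small_disks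
    {Cv : Type*} [Field Cv] [IsAlgClosed Cv]
    (v : AbsoluteValue Cv ℝ)
    (hna : IsNonarchimedean v)
    (hnt : ∃ x : Cv, x ≠ 0 ∧ v x ≠ 1)
    (hcomp : SeqComplete v)
    (φ : Polynomial Cv) (d : ℕ) (hdeg : φ.natDegree = d) (hd : 2 ≤ d)
    (a : Cv) (r : ℝ) (hr : 0 < r)
    -- `D̄(a, r)` contains the filled Julia set, and `r` is minimal such
    (hsub : filledJulia v φ ⊆ {x : Cv | v (x - a) ≤ r})
    (hmin : ∀ (b : Cv) (r' : ℝ), 0 < r' →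
      filledJulia v φ ⊆ {x : Cv | v (x - b) ≤ r'} → r ≤ r')
    -- `r_v > ρ_v`
    (hrρ : (v φ.leadingCoeff) ^ (-(1 / ((d : ℝ) - 1))) < r)
    (z₀ : Cv) (hz₀ : z₀ ∈ filledJulia v φ) :
    -- `X = φ^{-2}(z₀)` is a set of at most `d²` points
    {w : Cv | φ.eval (φ.eval w) = z₀}.Finite ∧
    {w : Cv | φ.eval (φ.eval w) = z₀}.ncard ≤ d ^ 2 ∧
    -- and the filled Julia set is covered by the open disks of radius `ρ_v`
    -- centered at the points of `X`
    filledJulia v φ ⊆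
      ⋃ x ∈ {w : Cv | φ.eval (φ.eval w) = z₀},
        {y : Cv | v (y - x) < (v φ.leadingCoeff) ^ (-(1 / ((d : ℝ) - 1)))} := by
    classical
  have hφne : φ ≠ 0 := fun h => by rw [h, natDegree_zero] at hdeg; omega
  set K := filledJulia v φ with hK
  set A := v φ.leadingCoeff with hAdef
  have hA : 0 < A := v.pos (leadingCoeff_ne_zero.mpr hφne)
  set ρ := A ^ (-(1 / ((d : ℝ) - 1))) with hρdef
  have hρpos : 0 < ρ := Real.rpow_pos_of_pos hA _
  have hdR : (2 : ℝ) ≤ (d : ℝ) := by exact_mod_cast hd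
  have hDne : ((d : ℝ) - 1) ≠ 0 := by linarith
  have hcast : ((d - 1 : ℕ) : ℝ) = (d : ℝ) - 1 := by
    rw [Nat.cast_sub (by omega : 1 ≤ d), Nat.cast_one]
  have hkey : ρ ^ (d - 1) = 1 / A := by
    rw [hρdef, ← Real.rpow_natCast (A ^ (-(1 / ((d : ℝ) - 1)))) (d - 1), hcast,
      ← Real.rpow_mul hA.le,
      show -(1 / ((d : ℝ) - 1)) * ((d : ℝ) - 1) = -1 by field_simp,
      Real.rpow_neg_one, one_div]
  -- Part 1 and 2 : finiteness and cardinality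
  have hψdeg : (φ.comp φ - C z₀).natDegree = d * d := by
    rw [natDegree_sub_C, natDegree_comp, hdeg]
  have hψne : φ.comp φ - C z₀ ≠ 0 := fun h => by
    rw [h, natDegree_zero] at hψdeg
    exact absurd hψdeg.symm (Nat.mul_pos (by omega) (by omega)).ne'
  have hXeq : {w : Cv | φ.eval (φ.eval w) = z₀} = {w | (φ.comp φ - C z₀).IsRoot w} := by
    ext w
    simp [IsRoot, sub_eq_zero, eval_comp]
  have hfin : {w : Cv | φ.eval (φ.eval w) = z₀}.Finite := by
    rw [hXeq]; exact finite_setOf_isRoot hψne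
  have hXeq2 : {w : Cv | φ.eval (φ.eval w) = z₀} = ↑(φ.comp φ - C z₀).roots.toFinset := by
    rw [hXeq]; ext w
    simp [Multiset.mem_toFinset, mem_roots, hψne]
  have hncard : {w : Cv | φ.eval (φ.eval w) = z₀}.ncard ≤ d ^ 2 := by
    rw [hXeq2, Set.ncard_coe_finset]
    calc (φ.comp φ - C z₀).roots.toFinset.card
        ≤ Multiset.card (φ.comp φ - C z₀).roots := (φ.comp φ - C z₀).roots.toFinset_card_le
      _ ≤ (φ.comp φ - C z₀).natDegree := (φ.comp φ - C z₀).card_roots'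
      _ = d ^ 2 := by rw [hψdeg, sq]
  refine ⟨hfin, hncard, ?_⟩
  -- The spread lemma
  have spread : ∀ w ∈ K, ∀ x ∈ K, ∃ t ∈ (φ - C w).roots, r ≤ v (x - t) := by
    intro w hw x hx
    by_contra hcon
    push_neg at hcon
    obtain ⟨hcard, hroot, heval⟩ := roots_data v φ d hdeg hd w
    have hMne : (φ - C w).roots ≠ 0 := fun h0 => by rw [h0] at hcard; simp at hcard; omega
    have hne : (φ - C w).roots.toFinset.Nonempty := by
      rw [Multiset.toFinset_nonempty]; exact hMne
    obtain ⟨t₀, ht₀mem, ht₀max⟩ := Finset.exists_max_image _ (fun t => v (x - t)) hne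
    have hT : v (x - t₀) < r := hcon t₀ (Multiset.mem_toFinset.mp ht₀mem)
    set s := (r / A) ^ ((d : ℝ)⁻¹) with hsdef
    have hrA : 0 < r / A := div_pos hr hA
    have hspos : 0 < s := Real.rpow_pos_of_pos hrA _
    have hsd : s ^ d = r / A := by
      rw [hsdef, ← Real.rpow_natCast ((r / A) ^ ((d : ℝ)⁻¹)) d, ← Real.rpow_mul hrA.le,
        inv_mul_cancel₀ (by positivity : (d : ℝ) ≠ 0), Real.rpow_one]
    have hslt : s < r := by
      have h2 : ρ ^ (d - 1) < r ^ (d - 1) :=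
        pow_lt_pow_left₀ hrρ hρpos.le (by omega)
      rw [hkey] at h2
      have h1 : s ^ d < r ^ d := by
        rw [hsd]
        calc r / A = r * (1 / A) := by ring
          _ < r * r ^ (d - 1) := by exact mul_lt_mul_of_pos_left h2 hr
          _ = r ^ d := by
              rw [← pow_succ']
              congr 1
              omega
      exact lt_of_pow_lt_pow_left₀ d hr.le h1
    have hKsub : K ⊆ {u | v (u - x) ≤ max (v (x - t₀)) s} := by
      intro u hu
      by_contra hgt
      simp only [Set.mem_setOf_eq, not_le] at hgt
      have heq : ∀ t ∈ (φ - C w).roots, v (u - t) = v (u - x) := by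
        intro t ht
        have h3 : v (x - t) < v (u - x) :=
          lt_of_le_of_lt (ht₀max t (Multiset.mem_toFinset.mpr ht))
            (lt_of_le_of_lt (le_max_left _ s) hgt)
        have h4 : u - t = (u - x) + (x - t) := by ring
        rw [h4, na_add_eq v hna h3]
      have h5 : v (φ.eval u - w) = A * v (u - x) ^ d := by
        rw [heval u, Multiset.map_congr rfl heq, Multiset.map_const',
          Multiset.prod_replicate, hcard]
      have h6 : v (φ.eval u - w) ≤ r :=
        dist_le_of_mem v hna hsub (filledJulia_fwd v φ hu) hw
      have h7 : r < A * v (u - x) ^ d := by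
        calc r = A * s ^ d := by rw [hsd]; field_simp
          _ < A * v (u - x) ^ d := by
              apply mul_lt_mul_of_pos_left _ hA
              exact pow_lt_pow_left₀ (lt_of_le_of_lt (le_max_right _ _) hgt) hspos.le
                (by omega)
      rw [h5] at h6
      linarith
    have hle := hmin x (max (v (x - t₀)) s) (lt_max_of_lt_right hspos) hKsub
    have : max (v (x - t₀)) s < r := max_lt hT hslt
    linarith
  -- The covering
  intro x hx
  have hy : φ.eval x ∈ K := filledJulia_fwd v φ hx
  have hyy : φ.eval (φ.eval x) ∈ K := filledJulia_fwd v φ hy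
  obtain ⟨hcard₀, hroot₀, heval₀⟩ := roots_data v φ d hdeg hd z₀
  obtain ⟨t₀, ht₀M, ht₀⟩ := spread z₀ hz₀ (φ.eval x) hy
  have hprod : A * (Multiset.map (fun t => v (φ.eval x - t)) (φ - C z₀).roots).prod ≤ r := by
    rw [← heval₀ (φ.eval x)]
    exact dist_le_of_mem v hna hsub hyy hz₀
  have step2 : ∃ β ∈ (φ - C z₀).roots, v (φ.eval x - β) ≤ ρ := by
    by_contra hcon
    push_neg at hcon
    have hm : Multiset.map (fun t => v (φ.eval x - t)) (φ - C z₀).roots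
        = v (φ.eval x - t₀) ::ₘ
          Multiset.map (fun t => v (φ.eval x - t)) ((φ - C z₀).roots.erase t₀) := by
      conv_lhs => rw [← Multiset.cons_erase ht₀M]
      rw [Multiset.map_cons]
    rw [hm, Multiset.prod_cons] at hprod
    have hcarde : Multiset.card ((φ - C z₀).roots.erase t₀) = d - 1 := by
      rw [Multiset.card_erase_of_mem ht₀M, hcard₀, Nat.pred_eq_sub_one]
    have hene : (φ - C z₀).roots.erase t₀ ≠ 0 := by
      intro h0
      rw [h0] at hcarde
      simp at hcarde
      omega
    have hrest : ρ ^ (d - 1) <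
        (Multiset.map (fun t => v (φ.eval x - t)) ((φ - C z₀).roots.erase t₀)).prod := by
      have := prod_gt_pow ρ hρpos.le
        (Multiset.map (fun t => v (φ.eval x - t)) ((φ - C z₀).roots.erase t₀))
        (fun u hu => by
          obtain ⟨t, ht, rfl⟩ := Multiset.mem_map.mp hu
          exact hcon t (Multiset.mem_of_mem_erase ht))
        (by simpa [Multiset.map_eq_zero] using hene)
      rwa [Multiset.card_map, hcarde] at this
    rw [hkey] at hrest
    have h8 : r * (1 / A) < v (φ.eval x - t₀) *
        (Multiset.map (fun t => v (φ.eval x - t)) ((φ - C z₀).roots.erase t₀)).prod :=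
      mul_lt_mul' ht₀ hrest (by positivity) (lt_of_lt_of_le hr ht₀)
    have h9 := mul_lt_mul_of_pos_left h8 hA
    have h10 : A * (r * (1 / A)) = r := by field_simp
    linarith
  obtain ⟨β, hβM, hβρ⟩ := step2
  have hβK : β ∈ K := by
    apply filledJulia_bwd v φ
    rw [hroot₀ β hβM]
    exact hz₀
  obtain ⟨hcard₁, hroot₁, heval₁⟩ := roots_data v φ d hdeg hd β
  obtain ⟨γ₀, hγ₀N, hγ₀⟩ := spread β hβK x hx
  have hprod₁ : A * (Multiset.map (fun t => v (x - t)) (φ - C β).roots).prod ≤ ρ := by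
    rw [← heval₁ x]
    exact hβρ
  have step3 : ∃ γ ∈ (φ - C β).roots, v (x - γ) < ρ := by
    by_contra hcon
    push_neg at hcon
    have hm : Multiset.map (fun t => v (x - t)) (φ - C β).roots
        = v (x - γ₀) ::ₘ Multiset.map (fun t => v (x - t)) ((φ - C β).roots.erase γ₀) := by
      conv_lhs => rw [← Multiset.cons_erase hγ₀N]
      rw [Multiset.map_cons]
    rw [hm, Multiset.prod_cons] at hprod₁
    have hcarde : Multiset.card ((φ - C β).roots.erase γ₀) = d - 1 := by
      rw [Multiset.card_erase_of_mem hγ₀N, hcard₁, Nat.pred_eq_sub_one]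
    have hrest : ρ ^ (d - 1) ≤
        (Multiset.map (fun t => v (x - t)) ((φ - C β).roots.erase γ₀)).prod := by
      have := prod_ge_pow ρ hρpos.le
        (Multiset.map (fun t => v (x - t)) ((φ - C β).roots.erase γ₀))
        (fun u hu => by
          obtain ⟨t, ht, rfl⟩ := Multiset.mem_map.mp hu
          exact hcon t (Multiset.mem_of_mem_erase ht))
      rwa [Multiset.card_map, hcarde] at this
    rw [hkey] at hrest
    have h8 : r * (1 / A) ≤ v (x - γ₀) *
        (Multiset.map (fun t => v (x - t)) ((φ - C β).roots.erase γ₀)).prod :=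
      mul_le_mul hγ₀ hrest (by positivity) (le_trans hr.le hγ₀)
    have h9 := mul_le_mul_of_nonneg_left h8 hA.le
    have h10 : A * (r * (1 / A)) = r := by field_simp
    linarith
  obtain ⟨γ, hγN, hγρ⟩ := step3
  refine Set.mem_iUnion₂.mpr ⟨γ, ?_, hγρ⟩
  show φ.eval (φ.eval γ) = z₀
  rw [hroot₁ γ hγN]
  exact hroot₀ β hβM
end

section
/- Let C_v be a complete and algebraically closed field with a nontrivial non-archimedean absolute value |·|_v, and let φ ∈ C_v[z] be a polynomial of degree d ≥ 2 with leading coefficient a_d ∈ C_v^×. Set ρ_v = |a_d|_v^{-1/(d-1)}, and let r_v be the radius of the unique smallest disk containing the filled Julia set 𝔎_{φ,v}. Suppose r_v > ρ_v. Let z_0 ∈ 𝔎_{φ,v} and let X = φ^{-2}(z_0). Then for every point w ∈ C_v satisfying |w − x|_v ≥ ρ_v for all x ∈ X, one has |φ^2(w) − z_0|_v > r_v; in particular, any such w lies outside 𝔎_{φ,v}. -/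
open Polynomial

private lemma absv_multiset_prod {Cv : Type*} [Field Cv] (v : AbsoluteValue Cv ℝ)
    (s : Multiset Cv) : v s.prod = (s.map fun x => v x).prod := by
  induction s using Multiset.induction with
  | empty => simp
  | cons a s ih => simp [ih]

private lemma pow_card_le_multiset_prod (ρ : ℝ) (hρ : 0 ≤ ρ) (s : Multiset ℝ)
    (h : ∀ x ∈ s, ρ ≤ x) : ρ ^ Multiset.card s ≤ s.prod := by
  induction s using Multiset.induction with
  | empty => simp
  | cons a s ih =>
    have ha := h a (Multiset.mem_cons_self a s)
    have hs := ih (fun x hx => h x (Multiset.mem_cons_of_mem hx))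
    simp only [Multiset.card_cons, Multiset.prod_cons, pow_succ']
    exact mul_le_mul ha hs (pow_nonneg hρ _) (le_trans hρ ha)

private lemma multiset_prod_const {s : Multiset ℝ} {t : ℝ}
    (h : ∀ x ∈ s, x = t) : s.prod = t ^ Multiset.card s := by
  induction s using Multiset.induction with
  | empty => simp
  | cons a s ih =>
    simp only [Multiset.card_cons, Multiset.prod_cons, pow_succ']
    rw [h a (Multiset.mem_cons_self a s), ih (fun x hx => h x (Multiset.mem_cons_of_mem hx))]

/-- Let `C_v` be a complete, algebraically closed field with a nontrivial
non-archimedean absolute value, `φ ∈ C_v[z]` a polynomial of degree `d ≥ 2` with leading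
coefficient `a_d`, and `ρ_v = |a_d|^{-1/(d-1)}`.  Let `r_v` be the radius of the unique
smallest disk containing `𝔎_{φ,v}`, and suppose `r_v > ρ_v`.  Let `z₀ ∈ 𝔎_{φ,v}` and
`X = φ^{-2}(z₀)`.  Then every `w ∈ C_v` with `|w - x| ≥ ρ_v` for all `x ∈ X` satisfies
`|φ²(w) - z₀| > r_v`; in particular any such `w` lies outside `𝔎_{φ,v}`. -/
theorem far_from_second_preimages_escapes
    {Cv : Type*} [Field Cv] [IsAlgClosed Cv]
    (v : AbsoluteValue Cv ℝ)
    (hna : IsNonarchimedean v)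
    (hnt : ∃ x : Cv, x ≠ 0 ∧ v x ≠ 1)
    (hcomp : SeqComplete v)
    (φ : Polynomial Cv) (d : ℕ) (hdeg : φ.natDegree = d) (hd : 2 ≤ d)
    (a : Cv) (r : ℝ) (hr : 0 < r)
    -- `D̄(a, r)` contains the filled Julia set, and `r` is minimal such
    (hsub : filledJulia v φ ⊆ {x : Cv | v (x - a) ≤ r})
    (hmin : ∀ (b : Cv) (r' : ℝ), 0 < r' →
      filledJulia v φ ⊆ {x : Cv | v (x - b) ≤ r'} → r ≤ r')
    -- `r_v > ρ_v`
    (hrρ : (v φ.leadingCoeff) ^ (-(1 / ((d : ℝ) - 1))) < r)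
    (z₀ : Cv) (hz₀ : z₀ ∈ filledJulia v φ)
    (w : Cv)
    -- `|w - x| ≥ ρ_v` for every `x ∈ X = φ^{-2}(z₀)`
    (hw : ∀ x : Cv, φ.eval (φ.eval x) = z₀ →
      (v φ.leadingCoeff) ^ (-(1 / ((d : ℝ) - 1))) ≤ v (w - x)) :
    r < v (φ.eval (φ.eval w) - z₀) ∧ w ∉ filledJulia v φ := by
  classical
  -- notation
  set A : ℝ := v φ.leadingCoeff with hAdef
  set ρ : ℝ := A ^ (-(1 / ((d : ℝ) - 1))) with hρdef
  have hdpos : 0 < d := by omega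
  have hφ0 : φ ≠ 0 := by
    intro h
    rw [h, natDegree_zero] at hdeg
    omega
  have hA0 : 0 < A := by
    simpa [hAdef] using (v.pos (leadingCoeff_ne_zero.mpr hφ0))
  have hρ0 : 0 < ρ := Real.rpow_pos_of_pos hA0 _
  have hd1 : ((d : ℝ) - 1) ≠ 0 := by
    have : (2 : ℝ) ≤ (d : ℝ) := by exact_mod_cast hd
    linarith
  have hd1cast : ((d - 1 : ℕ) : ℝ) = (d : ℝ) - 1 := by
    have : (1 : ℕ) ≤ d := by omega
    push_cast [this]
    ring
  -- key identity: A * ρ ^ (d - 1) = 1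
  have hρpow : ρ ^ (d - 1) = A⁻¹ := by
    rw [hρdef, ← Real.rpow_natCast (A ^ (-(1 / ((d : ℝ) - 1)))) (d - 1),
      ← Real.rpow_mul hA0.le, hd1cast]
    rw [show -(1 / ((d : ℝ) - 1)) * ((d : ℝ) - 1) = -1 by field_simp]
    rw [Real.rpow_neg_one]
  have hAρ : A * ρ ^ (d - 1) = 1 := by
    rw [hρpow]; field_simp
  -- strict inequality: r < A * r ^ d
  have hrpow : ρ ^ (d - 1) < r ^ (d - 1) := by
    apply pow_lt_pow_left₀ hrρ hρ0.le
    omega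
  have hArd1 : 1 < A * r ^ (d - 1) := by
    calc 1 = A * ρ ^ (d - 1) := hAρ.symm
    _ < A * r ^ (d - 1) := by exact (mul_lt_mul_iff_right₀ hA0).mpr hrpow
  have hArd : r < A * r ^ d := by
    have : r ^ d = r ^ (d - 1) * r := by
      rw [← pow_succ]
      congr 1
      omega
    rw [this]
    calc r = 1 * r := (one_mul r).symm
    _ < A * r ^ (d - 1) * r := by exact (mul_lt_mul_iff_left₀ hr).mpr hArd1
    _ = A * (r ^ (d - 1) * r) := by ring
  -- the filled Julia set is forward invariant
  have hKfwd : ∀ u ∈ filledJulia v φ, φ.eval u ∈ filledJulia v φ := by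
    rintro u ⟨B, hB⟩
    refine ⟨B, fun n => ?_⟩
    have := hB (n + 1)
    rwa [Function.iterate_succ_apply] at this
  -- preimages of points of the filled Julia set lie in it
  have hKpre : ∀ u y : Cv, y ∈ filledJulia v φ → φ.eval u = y → u ∈ filledJulia v φ := by
    rintro u y ⟨B, hB⟩ hu
    refine ⟨max B (v u), fun n => ?_⟩
    cases n with
    | zero => simp
    | succ m =>
      rw [Function.iterate_succ_apply]
      simp only [hu]
      exact le_max_of_le_left (hB m)
  -- points of the filled Julia set are within distance r of each other
  have hKdist : ∀ u y : Cv, u ∈ filledJulia v φ → y ∈ filledJulia v φ → v (u - y) ≤ r := by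
    intro u y hu hy
    have h1 : v (u - a) ≤ r := hsub hu
    have h2 : v (y - a) ≤ r := hsub hy
    have h3 : v (u - y) ≤ max (v (u - a)) (v (a - y)) := by
      have := hna (u - a) (a - y)
      rwa [show (u - a) + (a - y) = u - y by ring] at this
    rw [v.map_sub a y] at h3
    exact le_trans h3 (max_le h1 h2)
  -- basic facts about the polynomial φ - C c
  have hfact : ∀ c : Cv,
      Multiset.card (φ - C c).roots = d ∧
      (∀ x ∈ (φ - C c).roots, φ.eval x = c) ∧
      (∀ x : Cv, φ.eval x = c → x ∈ (φ - C c).roots) ∧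
      (∀ u : Cv, v (φ.eval u - c) = A * (((φ - C c).roots).map fun x => v (u - x)).prod) := by
    intro c
    set p : Polynomial Cv := φ - C c with hp
    have hpdeg : p.natDegree = d := by rw [hp, natDegree_sub_C, hdeg]
    have hp0 : p ≠ 0 := by
      intro h
      rw [h, natDegree_zero] at hpdeg
      omega
    have hsplit : Splits p := IsAlgClosed.splits p
    have hcard : Multiset.card p.roots = d := by
      rw [splits_iff_card_roots.mp hsplit, hpdeg]
    have hmem : ∀ x ∈ p.roots, φ.eval x = c := by
      intro x hx
      have := (mem_roots hp0).mp hx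
      simp only [hp, IsRoot.def, eval_sub, eval_C, sub_eq_zero] at this
      exact this
    have hmem' : ∀ x : Cv, φ.eval x = c → x ∈ p.roots := by
      intro x hx
      rw [mem_roots hp0]
      simp [hp, IsRoot.def, hx]
    have hlead : p.leadingCoeff = φ.leadingCoeff := by
      apply leadingCoeff_sub_of_degree_lt
      calc (C c).degree ≤ 0 := degree_C_le
      _ < φ.degree := by
          rw [← natDegree_pos_iff_degree_pos, hdeg]
          omega
    refine ⟨hcard, hmem, hmem', fun u => ?_⟩
    have heq : φ.eval u - c = p.eval u := by simp [hp]
    have heq2 : φ.eval u - c = p.leadingCoeff * (p.roots.map fun x => u - x).prod := by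
      conv_lhs => rw [heq, hsplit.eq_prod_roots]
      rw [eval_mul, eval_C, eval_multiset_prod, Multiset.map_map]
      congr 1
      refine congrArg Multiset.prod (Multiset.map_congr rfl ?_)
      intro x _
      simp [Function.comp]
    rw [heq2, v.map_mul, hlead, absv_multiset_prod, Multiset.map_map]
    rfl
  -- main lemma: every point of the filled Julia set has, for every center b,
  -- a preimage at distance ≥ r from b
  have hfar : ∀ y ∈ filledJulia v φ, ∀ b : Cv, ∃ x : Cv, φ.eval x = y ∧ r ≤ v (x - b) := by
    intro y hy b
    by_contra hcon
    push_neg at hcon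
    obtain ⟨hcard, hmem, hmem', heval⟩ := hfact y
    set R : Multiset Cv := (φ - C y).roots with hR
    have hRne : R.toFinset.Nonempty := by
      rw [Multiset.toFinset_nonempty]
      intro h
      rw [h] at hcard
      simp at hcard
      omega
    set s : ℝ := R.toFinset.sup' hRne (fun x => v (x - b)) with hs
    have hslt : s < r := by
      rw [hs, Finset.sup'_lt_iff]
      intro x hx
      exact hcon x (hmem x (Multiset.mem_toFinset.mp hx))
    set t₀ : ℝ := (r / A) ^ ((d : ℝ)⁻¹) with ht₀
    have hrA0 : 0 < r / A := div_pos hr hA0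
    have ht₀0 : 0 < t₀ := Real.rpow_pos_of_pos hrA0 _
    have hrd : r = (r ^ d) ^ ((d : ℝ)⁻¹) := by
      rw [← Real.rpow_natCast r d, ← Real.rpow_mul hr.le,
        mul_inv_cancel₀ (by exact_mod_cast hdpos.ne' : (d : ℝ) ≠ 0), Real.rpow_one]
    have hdinv : (0 : ℝ) < (d : ℝ)⁻¹ := inv_pos.mpr (by exact_mod_cast hdpos)
    have ht₀r : t₀ < r := by
      have h1 : r / A < r ^ d := by
        rw [div_lt_iff₀ hA0, mul_comm]
        exact hArd
      calc t₀ = (r / A) ^ ((d : ℝ)⁻¹) := ht₀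
      _ < (r ^ d) ^ ((d : ℝ)⁻¹) := Real.rpow_lt_rpow hrA0.le h1 hdinv
      _ = r := hrd.symm
    -- the filled Julia set is contained in the disk of radius max s t₀ around b
    have hcover : filledJulia v φ ⊆ {x : Cv | v (x - b) ≤ max s t₀} := by
      intro u hu
      simp only [Set.mem_setOf_eq]
      by_cases hcase : ∀ x ∈ R, v (x - b) < v (u - b)
      · -- all roots closer to b than u; then v (u - x) = v (u - b) for each root
        refine le_trans ?_ (le_max_right s t₀)
        set t : ℝ := v (u - b) with ht
        have hroot : ∀ x ∈ R, v (u - x) = t := by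
          intro x hx
          have h1 : v (u - x) ≤ t := by
            have := hna (u - b) (b - x)
            have heq : u - x = (u - b) + (b - x) := by ring
            rw [heq]
            refine le_trans this (max_le le_rfl ?_)
            rw [← v.map_sub]
            exact (hcase x hx).le
          have h2 : t ≤ v (u - x) := by
            by_contra h
            push_neg at h
            have := hna (u - x) (x - b)
            have heq : u - b = (u - x) + (x - b) := by ring
            rw [ht] at *
            have : v (u - b) ≤ max (v (u - x)) (v (x - b)) := heq ▸ this
            have hlt := max_lt h (hcase x hx)
            linarith
          linarith
        have hvy : v (φ.eval u - y) = A * t ^ d := by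
          rw [heval u]
          congr 1
          rw [multiset_prod_const (s := R.map fun x => v (u - x)) (t := t), Multiset.card_map,
            hcard]
          intro x hx
          obtain ⟨z, hz, rfl⟩ := Multiset.mem_map.mp hx
          exact hroot z hz
        have hle : v (φ.eval u - y) ≤ r := hKdist _ _ (hKfwd u hu) hy
        have htd : t ^ d ≤ r / A := by
          rw [le_div_iff₀ hA0, mul_comm]
          rw [hvy] at hle
          exact hle
        have ht0 : 0 ≤ t := v.nonneg _
        calc t = (t ^ d) ^ ((d : ℝ)⁻¹) := by
              rw [← Real.rpow_natCast t d, ← Real.rpow_mul ht0,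
                mul_inv_cancel₀ (by exact_mod_cast hdpos.ne' : (d : ℝ) ≠ 0), Real.rpow_one]
        _ ≤ t₀ := Real.rpow_le_rpow (by positivity) htd (by positivity)
      · -- some root x has v (x - b) ≥ v (u - b); then v (u - b) ≤ s
        push_neg at hcase
        obtain ⟨x, hx, hxb⟩ := hcase
        refine le_trans ?_ (le_max_left s t₀)
        calc v (u - b) ≤ v (x - b) := hxb
        _ ≤ s := Finset.le_sup' (fun x => v (x - b)) (Multiset.mem_toFinset.mpr hx)
    have := hmin b (max s t₀) (lt_max_of_lt_right ht₀0) hcover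
    have : r < r := lt_of_le_of_lt this (max_lt hslt ht₀r)
    exact absurd this (lt_irrefl r)
  -- first-level preimages: for every root y of φ - C z₀, r ≤ v (φ(w) - y)
  obtain ⟨hcard₁, hmem₁, hmem₁', heval₁⟩ := hfact z₀
  have hstep : ∀ y ∈ (φ - C z₀).roots, r ≤ v (φ.eval w - y) := by
    intro y hy
    have hyJ : y ∈ filledJulia v φ := hKpre y z₀ hz₀ (hmem₁ y hy)
    obtain ⟨hcard₂, hmem₂, hmem₂', heval₂⟩ := hfact y
    obtain ⟨x₀, hx₀, hx₀far⟩ := hfar y hyJ w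
    have hx₀mem : x₀ ∈ (φ - C y).roots := hmem₂' x₀ hx₀
    obtain ⟨T, hT⟩ := Multiset.exists_cons_of_mem hx₀mem
    have hTcard : Multiset.card T = d - 1 := by
      have := hcard₂
      rw [hT, Multiset.card_cons] at this
      omega
    rw [heval₂ w, hT]
    simp only [Multiset.map_cons, Multiset.prod_cons]
    have h1 : r ≤ v (w - x₀) := by rwa [v.map_sub]
    have h2 : ρ ^ (d - 1) ≤ (T.map fun x => v (w - x)).prod := by
      rw [← hTcard, ← Multiset.card_map (fun x => v (w - x)) T]
      apply pow_card_le_multiset_prod ρ hρ0.le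
      intro z hz
      obtain ⟨x, hx, rfl⟩ := Multiset.mem_map.mp hz
      have hxroot : x ∈ (φ - C y).roots := by
        rw [hT]
        exact Multiset.mem_cons_of_mem hx
      have : φ.eval (φ.eval x) = z₀ := by
        rw [hmem₂ x hxroot]
        exact hmem₁ y hy
      exact hw x this
    calc r = A * (r * ρ ^ (d - 1)) := by
          rw [show A * (r * ρ ^ (d - 1)) = r * (A * ρ ^ (d - 1)) by ring, hAρ, mul_one]
    _ ≤ A * (v (w - x₀) * (T.map fun x => v (w - x)).prod) := by
        apply mul_le_mul_of_nonneg_left _ hA0.le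
        exact mul_le_mul h1 h2 (by positivity) (v.nonneg _)
  -- conclusion
  have hmain : r < v (φ.eval (φ.eval w) - z₀) := by
    rw [heval₁ (φ.eval w)]
    calc r < A * r ^ d := hArd
    _ ≤ A * (((φ - C z₀).roots).map fun y => v (φ.eval w - y)).prod := by
        apply mul_le_mul_of_nonneg_left _ hA0.le
        rw [← hcard₁, ← Multiset.card_map (fun y => v (φ.eval w - y))]
        apply pow_card_le_multiset_prod r hr.le
        intro z hz
        obtain ⟨y, hy, rfl⟩ := Multiset.mem_map.mp hz
        exact hstep y hy
  refine ⟨hmain, fun hwK => ?_⟩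
  have : v (φ.eval (φ.eval w) - z₀) ≤ r := hKdist _ _ (hKfwd _ (hKfwd w hwK)) hz₀
  linarith
end

section
/- Let C_v be a complete and algebraically closed field with a nontrivial non-archimedean absolute value |·|_v, and let φ ∈ C_v[z] be a polynomial of degree d ≥ 2. Then φ has good reduction at v if and only if the filled Julia set 𝔎_{φ,v} equals the closed unit disk D̄(0,1) = {x ∈ C_v : |x|_v ≤ 1}. -/
open Polynomial

/-- `(p, q)` is a normalized degree-`n` homogeneous presentation with good reduction:
all coefficients are integral, some coefficient is a unit, and the reductions have no
common zero in `P^1` of the residue field.  (A common zero `[α : 1]` of the reduced pair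
corresponds to `α` integral with `|p(α)| < 1` and `|q(α)| < 1`; the common zero `[1 : 0]`
corresponds to `|p_n| < 1` and `|q_n| < 1`, where `p_n, q_n` are the degree-`n`
homogenization coefficients.  Since the residue field of `C_v` is algebraically closed,
this captures all common zeros.) -/
def IsGoodPair {Cv : Type*} [Field Cv] (v : AbsoluteValue Cv ℝ)
    (p q : Polynomial Cv) (n : ℕ) : Prop :=
  p.natDegree ≤ n ∧ q.natDegree ≤ n ∧
  (∀ m : ℕ, v (p.coeff m) ≤ 1) ∧ (∀ m : ℕ, v (q.coeff m) ≤ 1) ∧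
  ((∃ m : ℕ, v (p.coeff m) = 1) ∨ (∃ m : ℕ, v (q.coeff m) = 1)) ∧
  (∀ a : Cv, v a ≤ 1 → ¬(v (p.eval a) < 1 ∧ v (q.eval a) < 1)) ∧
  ¬(v (p.coeff n) < 1 ∧ v (q.coeff n) < 1)

/-- The degree-`n` rational map `p/q` has good reduction: some scaling of the
presentation `(p, q)` is normalized with good reduction. -/
def HasGoodReduction {Cv : Type*} [Field Cv] (v : AbsoluteValue Cv ℝ)
    (p q : Polynomial Cv) (n : ℕ) : Prop :=
  ∃ c : Cv, c ≠ 0 ∧ IsGoodPair v (C c * p) (C c * q) n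

section NAHelpers
variable {Cv : Type*} [Field Cv] (v : AbsoluteValue Cv ℝ)

theorem na_sub_le (hna : IsNonarchimedean v) (a b : Cv) :
    v (a - b) ≤ max (v a) (v b) := by
  have := hna a (-b)
  simpa [sub_eq_add_neg] using this

theorem na_sum_le (hna : IsNonarchimedean v) {ι : Type*} (s : Finset ι) (f : ι → Cv) {B : ℝ}
    (hB : 0 ≤ B) (h : ∀ i ∈ s, v (f i) ≤ B) : v (∑ i ∈ s, f i) ≤ B := by
  classical
  induction s using Finset.cons_induction with
  | empty => simpa using hB
  | cons i s hi ih =>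
    rw [Finset.sum_cons]
    refine le_trans (hna _ _) (max_le (h _ (Finset.mem_cons_self _ _)) (ih ?_))
    exact fun j hj => h j (Finset.mem_cons_of_mem hj)

theorem na_sum_lt (hna : IsNonarchimedean v) {ι : Type*} (s : Finset ι) (f : ι → Cv) {B : ℝ}
    (hB : 0 < B) (h : ∀ i ∈ s, v (f i) < B) : v (∑ i ∈ s, f i) < B := by
  classical
  induction s using Finset.cons_induction with
  | empty => simpa using hB
  | cons i s hi ih =>
    rw [Finset.sum_cons]
    refine lt_of_le_of_lt (hna _ _) (max_lt (h _ (Finset.mem_cons_self _ _)) (ih ?_))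
    exact fun j hj => h j (Finset.mem_cons_of_mem hj)

theorem na_add_eq_left (hna : IsNonarchimedean v) {a b : Cv} (h : v b < v a) :
    v (a + b) = v a := by
  refine le_antisymm (le_trans (hna a b) (max_le le_rfl h.le)) ?_
  have h2 : v a ≤ max (v (a + b)) (v b) := by
    have := na_sub_le v hna (a + b) b
    simpa using this
  rcases max_cases (v (a + b)) (v b) with ⟨he, _⟩ | ⟨he, _⟩
  · rw [he] at h2; exact h2
  · rw [he] at h2; exact absurd (lt_of_le_of_lt h2 h) (lt_irrefl _)

theorem na_dominant (hna : IsNonarchimedean v) {ι : Type*} (s : Finset ι) (f : ι → Cv) {k : ι}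
    (hk : k ∈ s) (hlt : ∀ i ∈ s, i ≠ k → v (f i) < v (f k)) :
    v (∑ i ∈ s, f i) = v (f k) := by
  classical
  rw [← Finset.add_sum_erase s f hk]
  rcases le_or_gt (v (f k)) 0 with h0 | h0
  · have h0 : v (f k) = 0 := le_antisymm h0 (v.nonneg _)
    have he : s.erase k = ∅ := by
      by_contra hne
      obtain ⟨j, hj⟩ := Finset.nonempty_iff_ne_empty.2 hne
      have := hlt j (Finset.mem_of_mem_erase hj) (Finset.ne_of_mem_erase hj)
      rw [h0] at this
      exact absurd (lt_of_le_of_lt (v.nonneg _) this) (lt_irrefl _)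
    rw [he]; simp
  · exact na_add_eq_left v hna (na_sum_lt v hna _ _ h0
      (fun i hi => hlt i (Finset.mem_of_mem_erase hi) (Finset.ne_of_mem_erase hi)))

theorem na_eval_le_one (hna : IsNonarchimedean v) (ψ : Polynomial Cv)
    (hc : ∀ m, v (ψ.coeff m) ≤ 1) {x : Cv} (hx : v x ≤ 1) : v (ψ.eval x) ≤ 1 := by
  rw [Polynomial.eval_eq_sum_range]
  refine na_sum_le v hna _ _ zero_le_one (fun i _ => ?_)
  rw [v.map_mul, v.map_pow]
  calc v (ψ.coeff i) * v x ^ i ≤ 1 * 1 ^ i :=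
        mul_le_mul (hc i) (pow_le_pow_left₀ (v.nonneg x) hx i) (pow_nonneg (v.nonneg x) i)
          zero_le_one
    _ = 1 := by simp

theorem na_eval_dominant (hna : IsNonarchimedean v) (ψ : Polynomial Cv) {n k : ℕ}
    (hψ : ψ.natDegree ≤ n) (hkn : k ≤ n) {x : Cv}
    (hlt : ∀ i ≤ n, i ≠ k → v (ψ.coeff i) * v x ^ i < v (ψ.coeff k) * v x ^ k) :
    v (ψ.eval x) = v (ψ.coeff k) * v x ^ k := by
  rw [Polynomial.eval_eq_sum_range' (lt_of_le_of_lt hψ (Nat.lt_succ_self n))]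
  have := na_dominant v hna (Finset.range (n + 1)) (fun i => ψ.coeff i * x ^ i)
    (k := k) (by simpa using Nat.lt_succ_of_le hkn)
    (fun i hi hik => by
      simp only [v.map_mul, v.map_pow]
      exact hlt i (Nat.lt_succ_iff.1 (Finset.mem_range.1 hi)) hik)
  simpa [v.map_mul, v.map_pow] using this

theorem na_root_le_one (hna : IsNonarchimedean v) (ψ : Polynomial Cv) {n : ℕ}
    (hc : ∀ m, v (ψ.coeff m) ≤ 1) (hl : v (ψ.coeff n) = 1) (hψ : ψ.natDegree ≤ n)
    {r : Cv} (hr : ψ.eval r = 0) : v r ≤ 1 := by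
  by_contra hgt
  push_neg at hgt
  have h0 : (0:ℝ) < v r := lt_trans zero_lt_one hgt
  have := na_eval_dominant v hna ψ hψ le_rfl (x := r) (fun i hi hik => by
    have hii : i < n := lt_of_le_of_ne hi hik
    calc v (ψ.coeff i) * v r ^ i ≤ 1 * v r ^ i :=
          mul_le_mul_of_nonneg_right (hc i) (pow_nonneg (v.nonneg r) i)
      _ = v r ^ i := one_mul _
      _ < v r ^ n := pow_lt_pow_right₀ hgt hii
      _ = v (ψ.coeff n) * v r ^ n := by rw [hl, one_mul])
  rw [hr, v.map_zero, hl, one_mul] at this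
  exact absurd this.symm (ne_of_gt (pow_pos h0 n))

/-- coefficients of `(X - C r) * q` stay integral -/
theorem coeff_X_sub_C_mul_le (hna : IsNonarchimedean v) (q : Polynomial Cv) {r : Cv}
    (hr : v r ≤ 1) (hq : ∀ m, v (q.coeff m) ≤ 1) (m : ℕ) :
    v (((X - C r) * q).coeff m) ≤ 1 := by
  have hexp : ((X - C r) * q).coeff m = (X * q).coeff m - r * q.coeff m := by
    rw [sub_mul, Polynomial.coeff_sub, Polynomial.coeff_C_mul]
  rw [hexp]
  refine le_trans (na_sub_le v hna _ _) (max_le ?_ ?_)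
  · cases m with
    | zero => simp
    | succ k => rw [Polynomial.coeff_X_mul]; exact hq k
  · rw [v.map_mul]
    calc v r * v (q.coeff m) ≤ 1 * 1 :=
      mul_le_mul hr (hq m) (v.nonneg _) zero_le_one
    _ = 1 := one_mul 1

theorem coeff_multiset_prod_le (hna : IsNonarchimedean v) (t : Multiset Cv)
    (ht : ∀ r ∈ t, v r ≤ 1) (m : ℕ) :
    v (((t.map (fun r => X - C r)).prod).coeff m) ≤ 1 := by
  induction t using Multiset.induction_on generalizing m with
  | empty =>
    simp only [Multiset.map_zero, Multiset.prod_zero]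
    rcases Nat.eq_zero_or_pos m with h | h
    · subst h; simp
    · rw [Polynomial.coeff_one, if_neg (by omega)]; simp
  | cons r s ih =>
    rw [Multiset.map_cons, Multiset.prod_cons]
    exact coeff_X_sub_C_mul_le v hna _ (ht r (Multiset.mem_cons_self r s))
      (fun k => ih (fun x hx => ht x (Multiset.mem_cons_of_mem hx)) k) m

theorem na_points [IsAlgClosed Cv] (hna : IsNonarchimedean v) (n : ℕ) :
    ∃ a : Fin n → Cv, (∀ i, v (a i) ≤ 1) ∧ ∀ i j, i ≠ j → v (a i - a j) = 1 := by
  induction n with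
  | zero => exact ⟨Fin.elim0, fun i => i.elim0, fun i => i.elim0⟩
  | succ n ih =>
    obtain ⟨a, ha, hpair⟩ := ih
    have hr : ∃ r : Cv, v r ≤ 1 ∧ ∀ i, v (r - a i) = 1 := by
      rcases Nat.eq_zero_or_pos n with hn0 | hn0
      · subst hn0
        exact ⟨0, by simp, fun i => i.elim0⟩
      · set P : Polynomial Cv := ∏ i : Fin n, (X - C (a i)) with hP
        have hPco : ∀ m, v (P.coeff m) ≤ 1 := by
          intro m
          have : P = ((Finset.univ.val.map a).map (fun r => X - C r)).prod := by
            rw [hP, Finset.prod_eq_multiset_prod, Multiset.map_map]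
            rfl
          rw [this]
          exact coeff_multiset_prod_le v hna _ (fun r hrr => by
            obtain ⟨i, _, hi⟩ := Multiset.mem_map.1 hrr
            exact hi ▸ ha i) m
        have hPm : P.Monic := monic_prod_of_monic _ _ (fun i _ => monic_X_sub_C (a i))
        have hPd : P.natDegree = n := by
          rw [hP, natDegree_prod_of_monic _ _ (fun i _ => monic_X_sub_C (a i))]
          simp
        set f : Polynomial Cv := P + 1 with hf
        have hfco : ∀ m, v (f.coeff m) ≤ 1 := by
          intro m
          rw [hf, Polynomial.coeff_add]
          refine le_trans (hna _ _) (max_le (hPco m) ?_)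
          rw [Polynomial.coeff_one]
          split <;> simp
        have hftop : f.coeff n = 1 := by
          rw [hf, Polynomial.coeff_add, Polynomial.coeff_one, if_neg (by omega)]
          have : P.coeff n = 1 := by
            have := hPm.coeff_natDegree
            rwa [hPd] at this
          rw [this]; ring
        have hfd : f.natDegree = n := by
          rw [hf]
          have h1 : (1 : Polynomial Cv) = C 1 := by simp
          rw [h1, natDegree_add_C, hPd]
        have hf0 : f ≠ 0 := fun h => by rw [h] at hfd; simp at hfd; omega
        obtain ⟨r, hroot⟩ := IsAlgClosed.exists_root f (by
          rw [Polynomial.degree_eq_natDegree hf0, hfd]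
          exact_mod_cast (Nat.cast_pos.2 hn0).ne' )
        have hrle : v r ≤ 1 := na_root_le_one v hna f hfco (by rw [hftop]; exact v.map_one)
          (le_of_eq hfd) hroot.eq_zero
        have heval : ∏ i : Fin n, (r - a i) = -1 := by
          have : P.eval r + 1 = 0 := by
            have := hroot.eq_zero
            rwa [hf, Polynomial.eval_add, Polynomial.eval_one] at this
          have hPe : P.eval r = ∏ i : Fin n, (r - a i) := by
            rw [hP, Polynomial.eval_prod]
            simp
          rw [hPe] at this
          exact eq_neg_of_add_eq_zero_left this
        have hprodv : ∏ i : Fin n, v (r - a i) = 1 := by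
          rw [← map_prod v, heval]
          simpa using v.map_one
        have hle1 : ∀ i, v (r - a i) ≤ 1 :=
          fun i => le_trans (na_sub_le v hna _ _) (max_le hrle (ha i))
        refine ⟨r, hrle, fun j => ?_⟩
        refine le_antisymm (hle1 j) ?_
        by_contra hlt
        push_neg at hlt
        have hlt2 : ∏ i : Fin n, v (r - a i) < 1 := by
          rw [← Finset.mul_prod_erase Finset.univ _ (Finset.mem_univ j)]
          calc v (r - a j) * ∏ i ∈ Finset.univ.erase j, v (r - a i)
              ≤ v (r - a j) * 1 := mul_le_mul_of_nonneg_left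
                (Finset.prod_le_one (fun i _ => v.nonneg _) (fun i _ => hle1 i)) (v.nonneg _)
            _ = v (r - a j) := mul_one _
            _ < 1 := hlt
        rw [hprodv] at hlt2
        exact lt_irrefl _ hlt2
    obtain ⟨r, hrle, hrdist⟩ := hr
    refine ⟨Fin.cons r a, ?_, ?_⟩
    · intro i
      induction i using Fin.cases with
      | zero => simpa using hrle
      | succ i => simpa using ha i
    · intro i j hij
      induction i using Fin.cases with
      | zero =>
        induction j using Fin.cases with
        | zero => exact absurd rfl hij
        | succ j => simpa using hrdist j
      | succ i =>
        induction j using Fin.cases with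
        | zero =>
          have : (Fin.cons r a : Fin (n+1) → Cv) i.succ - (Fin.cons r a : Fin (n+1) → Cv) 0
              = -(r - a i) := by simp
          rw [this, v.map_neg]
          exact hrdist i
        | succ j =>
          have hij' : i ≠ j := fun h => hij (by rw [h])
          simpa using hpair i j hij'

theorem na_coeff_le_of_eval_le (hna : IsNonarchimedean v) :
    ∀ n (ψ : Polynomial Cv), ψ.natDegree ≤ n →
    ∀ a : Fin (n + 1) → Cv, (∀ i, v (a i) ≤ 1) → (∀ i j, i ≠ j → v (a i - a j) = 1) →
    (∀ i, v (ψ.eval (a i)) ≤ 1) → ∀ m, v (ψ.coeff m) ≤ 1 := by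
  intro n
  induction n with
  | zero =>
    intro ψ hdeg a ha hdist hval m
    have hψ : ψ = C (ψ.coeff 0) := Polynomial.eq_C_of_natDegree_le_zero hdeg
    rcases Nat.eq_zero_or_pos m with h | h
    · subst h
      have : ψ.eval (a 0) = ψ.coeff 0 := by rw [hψ]; simp
      rw [← this]; exact hval 0
    · rw [hψ, Polynomial.coeff_C, if_neg (by omega)]
      simp
  | succ n ih =>
    intro ψ hdeg a ha hdist hval m
    set e := ψ.eval (a 0) with he
    obtain ⟨q, hq⟩ := Polynomial.X_sub_C_dvd_sub_C_eval (a := a 0) (p := ψ)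
    have hψq : ψ = C e + (X - C (a 0)) * q := by rw [← hq, ← he]; ring
    have hqdeg : q.natDegree ≤ n := by
      rcases eq_or_ne q 0 with h0 | h0
      · rw [h0]; simp
      · have h1 : (ψ - C e).natDegree ≤ n + 1 :=
          le_trans (Polynomial.natDegree_sub_le _ _)
            (by rw [Polynomial.natDegree_C]; simpa using hdeg)
        rw [hq, Polynomial.natDegree_mul (Polynomial.X_sub_C_ne_zero (a 0)) h0,
          Polynomial.natDegree_X_sub_C] at h1
        omega
    have hqval : ∀ i : Fin (n + 1), v (q.eval (a i.succ)) ≤ 1 := by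
      intro i
      have heq : ψ.eval (a i.succ) - e = (a i.succ - a 0) * q.eval (a i.succ) := by
        have := congrArg (Polynomial.eval (a i.succ)) hq
        simpa using this
      have h1 : v (a i.succ - a 0) = 1 := hdist _ _ (Fin.succ_ne_zero i)
      calc v (q.eval (a i.succ)) = v (a i.succ - a 0) * v (q.eval (a i.succ)) := by
            rw [h1, one_mul]
        _ = v (ψ.eval (a i.succ) - e) := by rw [← v.map_mul, ← heq]
        _ ≤ 1 := le_trans (na_sub_le v hna _ _) (max_le (hval _) (hval 0))
    have hqco : ∀ k, v (q.coeff k) ≤ 1 :=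
      ih q hqdeg (fun i => a i.succ) (fun i => ha _)
        (fun i j hij => hdist _ _ (fun h : i.succ = j.succ => hij (Fin.succ_injective _ h))) hqval
    rw [hψq, Polynomial.coeff_add]
    refine le_trans (hna _ _) (max_le ?_ (coeff_X_sub_C_mul_le v hna q (ha 0) hqco m))
    rw [Polynomial.coeff_C]
    split
    · exact hval 0
    · simp

theorem na_exists_z [IsAlgClosed Cv] (hnt : ∃ x : Cv, x ≠ 0 ∧ v x ≠ 1) {ε : ℝ} {e : ℕ}
    (hε : 0 < ε) (hε1 : ε < 1) (he : 1 ≤ e) :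
    ∃ z : Cv, 1 < v z ∧ ε * v z ^ e < 1 := by
  obtain ⟨x, hx0, hx1⟩ := hnt
  have hvx : 0 < v x := v.pos hx0
  have ht : ∃ t : Cv, 1 < v t := by
    rcases lt_or_gt_of_ne hx1 with h | h
    · refine ⟨x⁻¹, ?_⟩
      rw [map_inv₀]
      exact one_lt_inv₀ hvx |>.2 h
    · exact ⟨x, h⟩
  obtain ⟨t, ht⟩ := ht
  have hinv : 1 < 1 / ε := (one_lt_div hε).2 hε1
  obtain ⟨n, hn⟩ := pow_unbounded_of_one_lt (v t ^ e) hinv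
  have hn1 : 1 ≤ n := by
    by_contra hn0
    push_neg at hn0
    interval_cases n
    simp only [pow_zero] at hn
    exact absurd hn (not_lt.2 (one_le_pow₀ ht.le))
  obtain ⟨z, hz⟩ := IsAlgClosed.exists_root (X ^ n - C t) (by
    have : (X ^ n - C t).natDegree = n := by
      rw [Polynomial.natDegree_X_pow_sub_C]
    have h0 : (X ^ n - C t) ≠ 0 := fun h => by rw [h] at this; simp at this; omega
    rw [Polynomial.degree_eq_natDegree h0, this]
    exact_mod_cast (Nat.cast_pos.2 (by omega : 0 < n)).ne')
  have hzn : z ^ n = t := by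
    have := hz.eq_zero
    simp only [Polynomial.eval_sub, Polynomial.eval_pow, Polynomial.eval_X,
      Polynomial.eval_C] at this
    exact sub_eq_zero.1 this
  have hvz : v z ^ n = v t := by rw [← v.map_pow, hzn]
  have hz1 : 1 < v z := by
    by_contra hle
    push_neg at hle
    have : v z ^ n ≤ 1 := pow_le_one₀ (v.nonneg z) hle
    rw [hvz] at this
    linarith
  refine ⟨z, hz1, ?_⟩
  by_contra hge
  push_neg at hge
  have hpow : (1:ℝ) ≤ (ε * v z ^ e) ^ n := one_le_pow₀ hge
  have hexp : (ε * v z ^ e) ^ n = ε ^ n * v t ^ e := by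
    rw [mul_pow, ← pow_mul, Nat.mul_comm e n, pow_mul, hvz]
  rw [hexp] at hpow
  have : v t ^ e < (1 / ε) ^ n := hn
  have hεn : 0 < ε ^ n := pow_pos hε n
  have : ε ^ n * v t ^ e < ε ^ n * (1 / ε) ^ n := by
    exact (mul_lt_mul_iff_right₀ hεn).2 hn
  rw [← mul_pow, mul_one_div, div_self hε.ne', one_pow] at this
  linarith

end NAHelpers


section Julia
variable {Cv : Type*} [Field Cv] (v : AbsoluteValue Cv ℝ) (φ : Polynomial Cv)

theorem julia_apply_mem {x : Cv} (hx : x ∈ filledJulia v φ) :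
    φ.eval x ∈ filledJulia v φ := by
  obtain ⟨B, hB⟩ := hx
  refine ⟨B, fun n => ?_⟩
  have : (fun y => φ.eval y)^[n] (φ.eval x) = (fun y => φ.eval y)^[n + 1] x := by
    rw [Function.iterate_succ_apply]
  rw [this]
  exact hB (n + 1)

theorem julia_fixed_mem {x : Cv} (hx : φ.eval x = x) : x ∈ filledJulia v φ := by
  refine ⟨v x, fun n => ?_⟩
  have : (fun y => φ.eval y)^[n] x = x := Function.iterate_fixed hx n
  rw [this]

end Julia

section MainParts
variable {Cv : Type*} [Field Cv] [IsAlgClosed Cv] (v : AbsoluteValue Cv ℝ)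

theorem good_coeffs_of_hasGoodReduction (hna : IsNonarchimedean v)
    (φ : Polynomial Cv) (d : ℕ) (hdeg : φ.natDegree = d) (hd : 2 ≤ d)
    (h : HasGoodReduction v φ 1 d) :
    (∀ m, v (φ.coeff m) ≤ 1) ∧ v (φ.coeff d) = 1 := by
  obtain ⟨c, hc0, hdp, hdq, hcp, hcq, hex, hall, hlast⟩ := h
  have hq1 : (C c * 1 : Polynomial Cv) = C c := mul_one _
  have hcd1 : v (c * φ.coeff d) = 1 := by
    refine le_antisymm (by simpa [Polynomial.coeff_C_mul] using hcp d) ?_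
    by_contra hlt
    push_neg at hlt
    refine hlast ⟨by simpa [Polynomial.coeff_C_mul] using hlt, ?_⟩
    rw [hq1, Polynomial.coeff_C, if_neg (by omega)]
    simpa using zero_lt_one
  have hcle : v c ≤ 1 := by
    have := hcq 0
    rwa [hq1, Polynomial.coeff_C, if_pos rfl] at this
  have hc1 : v c = 1 := by
    refine le_antisymm hcle ?_
    by_contra hlt
    push_neg at hlt
    -- find a root of φ in the unit disk
    have hφ0 : φ ≠ 0 := fun h0 => by rw [h0] at hdeg; simp at hdeg; omega
    obtain ⟨r, hroot⟩ := IsAlgClosed.exists_root φ (by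
      rw [Polynomial.degree_eq_natDegree hφ0, hdeg]
      exact_mod_cast (Nat.cast_pos.2 (by omega : 0 < d)).ne')
    have hrle : v r ≤ 1 := by
      refine na_root_le_one v hna (C c * φ) (n := d) hcp (by
        rw [Polynomial.coeff_C_mul]; exact hcd1) ?_ ?_
      · rw [Polynomial.natDegree_C_mul hc0, hdeg]
      · rw [Polynomial.eval_mul, Polynomial.eval_C, hroot.eq_zero, mul_zero]
    refine hall r hrle ⟨?_, ?_⟩
    · rw [Polynomial.eval_mul, Polynomial.eval_C, hroot.eq_zero, mul_zero, v.map_zero]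
      exact zero_lt_one
    · rw [hq1, Polynomial.eval_C]
      exact hlt
  constructor
  · intro m
    have := hcp m
    rwa [Polynomial.coeff_C_mul, v.map_mul, hc1, one_mul] at this
  · rwa [v.map_mul, hc1, one_mul] at hcd1

theorem hasGoodReduction_of_good_coeffs
    (φ : Polynomial Cv) (d : ℕ) (hdeg : φ.natDegree = d) (hd : 2 ≤ d)
    (hco : ∀ m, v (φ.coeff m) ≤ 1) (hcd : v (φ.coeff d) = 1) :
    HasGoodReduction v φ 1 d := by
  refine ⟨1, one_ne_zero, ?_⟩
  have h1 : (C 1 : Polynomial Cv) = 1 := by simp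
  rw [h1, one_mul, one_mul]
  refine ⟨le_of_eq hdeg, by simp, hco, ?_, Or.inr ⟨0, by simp⟩, ?_, ?_⟩
  · intro m
    rw [Polynomial.coeff_one]
    split <;> simp
  · intro a _ hcontra
    rw [Polynomial.eval_one, v.map_one] at hcontra
    exact absurd hcontra.2 (lt_irrefl 1)
  · intro hcontra
    rw [hcd] at hcontra
    exact absurd hcontra.1 (lt_irrefl 1)

theorem julia_eq_ball_of_good_coeffs (hna : IsNonarchimedean v)
    (φ : Polynomial Cv) (d : ℕ) (hdeg : φ.natDegree = d) (hd : 2 ≤ d)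
    (hco : ∀ m, v (φ.coeff m) ≤ 1) (hcd : v (φ.coeff d) = 1) :
    filledJulia v φ = {x : Cv | v x ≤ 1} := by
  ext x
  simp only [Set.mem_setOf_eq]
  constructor
  · intro hx
    by_contra hgt
    push_neg at hgt
    -- escape: v (φ^[n] x) ≥ (v x)^(n+1)
    have key : ∀ n : ℕ, v x ^ (n + 1) ≤ v ((fun y => φ.eval y)^[n] x) := by
      intro n
      induction n with
      | zero => simp
      | succ n ihn =>
        set w := (fun y => φ.eval y)^[n] x with hw
        have hw1 : 1 < v w := lt_of_lt_of_le (one_lt_pow₀ hgt (by omega)) ihn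
        have hweval : v (φ.eval w) = v w ^ d := by
          have := na_eval_dominant v hna φ (le_of_eq hdeg) (le_refl d) (x := w)
            (fun i hi hik => by
              have hii : i < d := lt_of_le_of_ne hi hik
              calc v (φ.coeff i) * v w ^ i ≤ 1 * v w ^ i :=
                    mul_le_mul_of_nonneg_right (hco i) (pow_nonneg (v.nonneg w) i)
                _ = v w ^ i := one_mul _
                _ < v w ^ d := pow_lt_pow_right₀ hw1 hii
                _ = v (φ.coeff d) * v w ^ d := by rw [hcd, one_mul])
          rwa [hcd, one_mul] at this
        have hiter : (fun y => φ.eval y)^[n + 1] x = φ.eval w := by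
          rw [hw]
          exact Function.iterate_succ_apply' (fun y => φ.eval y) n x
        rw [hiter, hweval]
        calc v x ^ (n + 2) = v x ^ (n + 1) * v x := by ring
          _ ≤ v w * v w := mul_le_mul ihn
              (le_trans (le_self_pow₀ hgt.le (by omega)) ihn)
              (v.nonneg x) (v.nonneg w)
          _ = v w ^ 2 := by ring
          _ ≤ v w ^ d := pow_le_pow_right₀ hw1.le hd
    obtain ⟨B, hB⟩ := hx
    obtain ⟨n, hn⟩ := pow_unbounded_of_one_lt B hgt
    have h1 : v x ^ n ≤ v x ^ (n + 1) := pow_le_pow_right₀ hgt.le (by omega)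
    linarith [hn, h1, key n, hB n]
  · intro hx
    refine ⟨1, fun n => ?_⟩
    induction n with
    | zero => simpa using hx
    | succ n ihn =>
      rw [Function.iterate_succ_apply']
      exact na_eval_le_one v hna φ hco ihn

end MainParts

section Final
variable {Cv : Type*} [Field Cv] [IsAlgClosed Cv]

theorem good_coeffs_of_julia_eq_ball (v : AbsoluteValue Cv ℝ) (hna : IsNonarchimedean v)
    (hnt : ∃ x : Cv, x ≠ 0 ∧ v x ≠ 1)
    (φ : Polynomial Cv) (d : ℕ) (hdeg : φ.natDegree = d) (hd : 2 ≤ d)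
    (h : filledJulia v φ = {x : Cv | v x ≤ 1}) :
    (∀ m, v (φ.coeff m) ≤ 1) ∧ v (φ.coeff d) = 1 := by
  have hdisk : ∀ x : Cv, v x ≤ 1 ↔ x ∈ filledJulia v φ := by
    intro x
    rw [h]
    exact Iff.rfl
  -- Step 1: all coefficients are integral
  have hco : ∀ m, v (φ.coeff m) ≤ 1 := by
    obtain ⟨a, ha, hdist⟩ := na_points v hna (d + 1)
    refine na_coeff_le_of_eval_le v hna d φ (le_of_eq hdeg) a ha hdist (fun i => ?_)
    have hmem : a i ∈ filledJulia v φ := (hdisk (a i)).1 (ha i)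
    have := julia_apply_mem v φ hmem
    exact (hdisk _).2 this
  refine ⟨hco, ?_⟩
  -- Step 2: the leading coefficient is a unit
  refine le_antisymm (hco d) ?_
  by_contra hlt
  push_neg at hlt
  have hφ0 : φ ≠ 0 := fun h0 => by rw [h0] at hdeg; simp at hdeg; omega
  have hlead : φ.coeff d ≠ 0 := by
    rw [← hdeg]
    exact Polynomial.leadingCoeff_ne_zero.mpr hφ0
  set ψ : Polynomial Cv := φ - X with hψ
  have hψd : ψ.natDegree = d := by
    rw [hψ, Polynomial.natDegree_sub_eq_left_of_natDegree_lt, hdeg]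
    rw [Polynomial.natDegree_X, hdeg]; omega
  have hψ0 : ψ ≠ 0 := fun h0 => by rw [h0] at hψd; simp at hψd; omega
  have hψlead : ψ.leadingCoeff = φ.coeff d := by
    rw [Polynomial.leadingCoeff, hψd, hψ, Polynomial.coeff_sub, Polynomial.coeff_X,
      if_neg (by omega)]
    ring
  -- roots of ψ are fixed points, hence in the unit ball
  have hroots : ∀ r ∈ ψ.roots, v r ≤ 1 := by
    intro r hr
    have hzero : ψ.eval r = 0 := (Polynomial.isRoot_of_mem_roots hr).eq_zero
    have hfix : φ.eval r = r := by
      rw [hψ] at hzero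
      simp only [Polynomial.eval_sub, Polynomial.eval_X] at hzero
      exact sub_eq_zero.1 hzero
    exact (hdisk r).2 (julia_fixed_mem v φ hfix)
  -- all coefficients of ψ are bounded by |φ_d|
  have hψco : ∀ m, v (ψ.coeff m) ≤ v (φ.coeff d) := by
    intro m
    have hsplit : ψ = C ψ.leadingCoeff * (ψ.roots.map (fun r => X - C r)).prod :=
      (IsAlgClosed.splits ψ).eq_prod_roots
    rw [hsplit, Polynomial.coeff_C_mul, v.map_mul, hψlead]
    calc v (φ.coeff d) * v (((ψ.roots.map (fun r => X - C r)).prod).coeff m)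
        ≤ v (φ.coeff d) * 1 :=
          mul_le_mul_of_nonneg_left (coeff_multiset_prod_le v hna _ hroots m) (v.nonneg _)
      _ = v (φ.coeff d) := mul_one _
  -- hence |φ_1| = 1 and all other coefficients are < 1
  have hφ1 : v (φ.coeff 1) = 1 := by
    have h1 : v (φ.coeff 1 - 1) ≤ v (φ.coeff d) := by
      have := hψco 1
      rwa [hψ, Polynomial.coeff_sub, Polynomial.coeff_X_one] at this
    have h2 : v (φ.coeff 1 - 1) < 1 := lt_of_le_of_lt h1 hlt
    have h3 : φ.coeff 1 = 1 + (φ.coeff 1 - 1) := by ring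
    rw [h3, na_add_eq_left v hna (by rw [v.map_one]; exact h2), v.map_one]
  set ε : ℝ := max (1/2) (v (φ.coeff d)) with hε
  have hε0 : 0 < ε := lt_of_lt_of_le (by norm_num) (le_max_left _ _)
  have hε1 : ε < 1 := max_lt (by norm_num) hlt
  have hεb : ∀ j, j ≠ 1 → v (φ.coeff j) ≤ ε := by
    intro j hj
    rcases lt_or_ge j (d + 1) with hjd | hjd
    · have : φ.coeff j = ψ.coeff j := by
        rcases eq_or_ne j d with hjd' | hjd'
        · subst hjd'
          rw [hψ, Polynomial.coeff_sub, Polynomial.coeff_X, if_neg (by omega)]; ring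
        · rw [hψ, Polynomial.coeff_sub, Polynomial.coeff_X, if_neg (fun hh => hj hh.symm)]
          ring
      rw [this]
      exact le_trans (hψco j) (le_max_right _ _)
    · have : φ.coeff j = 0 := Polynomial.coeff_eq_zero_of_natDegree_lt (by omega)
      rw [this, v.map_zero]
      exact hε0.le
  -- choose a point z just outside the unit ball with bounded orbit
  obtain ⟨z, hz1, hzε⟩ := na_exists_z v hnt hε0 hε1 (e := d - 1) (by omega)
  have hstep : ∀ w : Cv, v w = v z → v (φ.eval w) = v z := by
    intro w hw
    have hw1 : 1 < v w := hw ▸ hz1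
    have := na_eval_dominant v hna φ (le_of_eq hdeg) (by omega : 1 ≤ d) (x := w)
      (fun i hi hik => by
        rw [hφ1, one_mul, pow_one, hw]
        rcases Nat.eq_zero_or_pos i with hi0 | hi0
        · subst hi0
          rw [pow_zero, mul_one]
          exact lt_trans (lt_of_le_of_lt (hεb 0 (by omega)) hε1) hz1
        · have hpow : v z ^ d = v z ^ (d - 1) * v z := by
            rw [← pow_succ]
            congr 1
            omega
          calc v (φ.coeff i) * v z ^ i ≤ ε * v z ^ i :=
                mul_le_mul_of_nonneg_right (hεb i hik) (pow_nonneg (v.nonneg z) i)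
            _ ≤ ε * v z ^ d := mul_le_mul_of_nonneg_left
                (pow_le_pow_right₀ hz1.le hi) hε0.le
            _ = (ε * v z ^ (d - 1)) * v z := by rw [hpow]; ring
            _ < 1 * v z := mul_lt_mul_of_pos_right hzε (lt_trans zero_lt_one hz1)
            _ = v z := one_mul _)
    rw [this, hφ1, one_mul, pow_one, hw]
  have horbit : ∀ n : ℕ, v ((fun y => φ.eval y)^[n] z) = v z := by
    intro n
    induction n with
    | zero => simp
    | succ n ihn =>
      rw [Function.iterate_succ_apply']
      exact hstep _ ihn
  have hzmem : z ∈ filledJulia v φ := ⟨v z, fun n => le_of_eq (horbit n)⟩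
  have := (hdisk z).2 hzmem
  linarith

end Final

/-- Let `C_v` be a complete, algebraically closed field with a nontrivial
non-archimedean absolute value, and let `φ ∈ C_v[z]` be a polynomial of degree `d ≥ 2`.
Then `φ` has good reduction at `v` iff the filled Julia set `𝔎_{φ,v}` equals the closed
unit disk `D̄(0,1)`. -/
theorem polynomial_goodReduction_iff_filledJulia_eq_unitBall
    {Cv : Type*} [Field Cv] [IsAlgClosed Cv]
    (v : AbsoluteValue Cv ℝ)
    (hna : IsNonarchimedean v)
    (hnt : ∃ x : Cv, x ≠ 0 ∧ v x ≠ 1)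
    (hcomp : SeqComplete v)
    (φ : Polynomial Cv) (d : ℕ) (hdeg : φ.natDegree = d) (hd : 2 ≤ d) :
    HasGoodReduction v φ 1 d ↔ filledJulia v φ = {x : Cv | v x ≤ 1} := by
  constructor
  · intro h
    obtain ⟨hco, hcd⟩ := good_coeffs_of_hasGoodReduction v hna φ d hdeg hd h
    exact julia_eq_ball_of_good_coeffs v hna φ d hdeg hd hco hcd
  · intro h
    obtain ⟨hco, hcd⟩ := good_coeffs_of_julia_eq_ball v hna hnt φ d hdeg hd h
    exact hasGoodReduction_of_good_coeffs v φ d hdeg hd hco hcd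
end

section
/- Let C_v be a complete and algebraically closed field with a nontrivial non-archimedean absolute value |·|_v, and let φ ∈ C_v[z] be a polynomial of degree d ≥ 2. Then for every x ∈ C_v, the limit λ(x) = lim_{n→∞} d^{-n} log max{|φ^n(x)|_v, 1} exists and is nonnegative; it satisfies the functional equation λ(φ(x)) = d·λ(x); and λ(x) = 0 if and only if x belongs to the filled Julia set 𝔎_{φ,v}. -/
open Polynomial Filter

lemma quasi_bound {Cv : Type*} [Field Cv] (v : AbsoluteValue Cv ℝ)
    (φ : Polynomial Cv) (d : ℕ) (hdeg : φ.natDegree = d) (hd : 2 ≤ d) :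
    ∃ C R : ℝ, 0 ≤ C ∧ 1 ≤ R ∧
      (∀ x : Cv, |Real.log (max (v (φ.eval x)) 1) - d * Real.log (max (v x) 1)| ≤ C) ∧
      (∀ x : Cv, R < v x → R < v (φ.eval x)) := by
  have hφ : φ ≠ 0 := by
    intro h; rw [h, natDegree_zero] at hdeg; omega
  have hcd : φ.coeff d ≠ 0 := by
    rw [← hdeg, Polynomial.coeff_natDegree]
    exact Polynomial.leadingCoeff_ne_zero.mpr hφ
  set c : ℝ := v (φ.coeff d) with hc_def
  have hc : 0 < c := v.pos hcd
  set K : ℝ := ∑ i ∈ Finset.range d, v (φ.coeff i) with hK_def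
  have hK : 0 ≤ K := Finset.sum_nonneg fun i _ => v.nonneg _
  set R : ℝ := max 1 (2 * (K + 1) / c) with hR_def
  have hR1 : 1 ≤ R := le_max_left _ _
  have heval : ∀ x : Cv, φ.eval x
      = (∑ i ∈ Finset.range d, φ.coeff i * x ^ i) + φ.coeff d * x ^ d := by
    intro x
    rw [Polynomial.eval_eq_sum_range, hdeg, Finset.sum_range_succ]
  have hsub : ∀ p q : Cv, v (p - q) ≤ v p + v q := fun p q => by
    simpa [sub_eq_add_neg] using v.add_le p (-q)
  -- tail bound
  have htail : ∀ x : Cv, 1 ≤ v x →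
      v (φ.eval x - φ.coeff d * x ^ d) ≤ K * v x ^ (d - 1) := by
    intro x hx
    have h1 : φ.eval x - φ.coeff d * x ^ d = ∑ i ∈ Finset.range d, φ.coeff i * x ^ i := by
      rw [heval x]; ring
    rw [h1]
    calc v (∑ i ∈ Finset.range d, φ.coeff i * x ^ i)
        ≤ ∑ i ∈ Finset.range d, v (φ.coeff i * x ^ i) := v.sum_le _ _
      _ ≤ ∑ i ∈ Finset.range d, v (φ.coeff i) * v x ^ (d - 1) := by
          refine Finset.sum_le_sum fun i hi => ?_
          rw [v.map_mul, v.map_pow]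
          refine mul_le_mul_of_nonneg_left ?_ (v.nonneg _)
          have hi' := Finset.mem_range.mp hi
          exact pow_le_pow_right₀ hx (by omega : i ≤ d - 1)
      _ = K * v x ^ (d - 1) := by rw [← Finset.sum_mul]
  have hxd : ∀ x : Cv, v x ^ d = v x ^ (d - 1) * v x := by
    intro x; rw [← pow_succ]; congr 1; omega
  -- upper bound for large x
  have hup : ∀ x : Cv, 1 ≤ v x → v (φ.eval x) ≤ (c + K) * v x ^ d := by
    intro x hx
    have h1 : v (φ.eval x) ≤ v (φ.coeff d * x ^ d) + v (φ.eval x - φ.coeff d * x ^ d) := by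
      have := v.add_le (φ.coeff d * x ^ d) (φ.eval x - φ.coeff d * x ^ d)
      simpa using this
    have h2 : v (φ.coeff d * x ^ d) = c * v x ^ d := by rw [v.map_mul, v.map_pow]
    have h3 := htail x hx
    have h4 : v x ^ (d - 1) ≤ v x ^ d := pow_le_pow_right₀ hx (by omega)
    nlinarith [pow_nonneg (v.nonneg x) (d - 1)]
  -- lower bound for large x
  have hbig : ∀ x : Cv, R < v x → 2 * (K + 1) < c * v x := by
    intro x hx
    have h2 : 2 * (K + 1) / c < v x := lt_of_le_of_lt (le_max_right _ _) hx
    calc 2 * (K + 1) = 2 * (K + 1) / c * c := by field_simp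
      _ < v x * c := by exact mul_lt_mul_of_pos_right h2 hc
      _ = c * v x := mul_comm _ _
  have hlow : ∀ x : Cv, R < v x → c / 2 * v x ^ d ≤ v (φ.eval x) := by
    intro x hx
    have hx1 : 1 ≤ v x := le_trans hR1 hx.le
    have h1 : v (φ.coeff d * x ^ d) ≤ v (φ.eval x) + v (φ.eval x - φ.coeff d * x ^ d) := by
      have h := hsub (φ.eval x) (φ.eval x - φ.coeff d * x ^ d)
      simpa using h
    have h2 : v (φ.coeff d * x ^ d) = c * v x ^ d := by rw [v.map_mul, v.map_pow]
    have h3 := htail x hx1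
    have h5 := hbig x hx
    have h6 : (1:ℝ) ≤ v x ^ (d - 1) := one_le_pow₀ hx1
    nlinarith [hxd x]
  -- escape
  have hesc : ∀ x : Cv, R < v x → R < v (φ.eval x) := by
    intro x hx
    have hx1 : 1 ≤ v x := le_trans hR1 hx.le
    have h1 := hlow x hx
    have h5 := hbig x hx
    have h6 : v x ≤ v x ^ (d - 1) := by
      calc v x = v x ^ 1 := (pow_one _).symm
        _ ≤ v x ^ (d - 1) := pow_le_pow_right₀ hx1 (by omega)
    -- v eval ≥ (c/2) vx^(d-1) * vx ≥ (c/2)vx * vx > vx  (since (c/2)vx > K+1 ≥ 1)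
    have h7 : v x < v (φ.eval x) := by nlinarith [hxd x]
    exact lt_trans hx h7
  -- both-side log bound constant
  set M : ℝ := max ((c + K) * R ^ d) 1 with hM_def
  have hM1 : (1:ℝ) ≤ M := le_max_right _ _
  set C : ℝ := max (|Real.log (c / 2)| + |Real.log (c + K)|)
      (Real.log M + d * Real.log R) with hC_def
  have hC0 : 0 ≤ C :=
    le_trans (add_nonneg (Real.log_nonneg hM1)
      (mul_nonneg (Nat.cast_nonneg d) (Real.log_nonneg hR1))) (le_max_right _ _)
  refine ⟨C, R, hC0, hR1, ?_, hesc⟩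
  intro x
  rcases le_or_gt (v x) R with hxR | hxR
  · -- small case
    have hgx0 : 0 ≤ Real.log (max (v x) 1) := Real.log_nonneg (le_max_right _ _)
    have hgxR : Real.log (max (v x) 1) ≤ Real.log R :=
      Real.log_le_log (by positivity) (max_le hxR hR1)
    have hy : v (φ.eval x) ≤ (c + K) * R ^ d := by
      rcases le_or_gt 1 (v x) with h1 | h1
      · calc v (φ.eval x) ≤ (c + K) * v x ^ d := hup x h1
          _ ≤ (c + K) * R ^ d := by
            refine mul_le_mul_of_nonneg_left (pow_le_pow_left₀ (v.nonneg x) hxR d) (by positivity)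
      · have hfirst : v (φ.eval x) ≤ v (φ.coeff d * x ^ d) + v (φ.eval x - φ.coeff d * x ^ d) := by
          simpa using v.add_le (φ.coeff d * x ^ d) (φ.eval x - φ.coeff d * x ^ d)
        refine le_trans hfirst ?_
        · 
            have h2 : v (φ.coeff d * x ^ d) = c * v x ^ d := by rw [v.map_mul, v.map_pow]
            have h3 : v (φ.eval x - φ.coeff d * x ^ d)
                ≤ ∑ i ∈ Finset.range d, v (φ.coeff i) * v x ^ i := by
              have h1' : φ.eval x - φ.coeff d * x ^ d
                  = ∑ i ∈ Finset.range d, φ.coeff i * x ^ i := by rw [heval x]; ring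
              rw [h1']
              refine le_trans (v.sum_le _ _) (le_of_eq ?_)
              refine Finset.sum_congr rfl fun i _ => by rw [v.map_mul, v.map_pow]
            have h4 : ∀ i : ℕ, i ≤ d → v x ^ i ≤ R ^ d := by
              intro i hi
              calc v x ^ i ≤ 1 ^ i := pow_le_pow_left₀ (v.nonneg x) h1.le i
                _ = 1 := one_pow i
                _ ≤ R ^ d := one_le_pow₀ hR1
            have h5 : ∑ i ∈ Finset.range d, v (φ.coeff i) * v x ^ i ≤ K * R ^ d := by
              calc ∑ i ∈ Finset.range d, v (φ.coeff i) * v x ^ i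
                  ≤ ∑ i ∈ Finset.range d, v (φ.coeff i) * R ^ d := by
                    refine Finset.sum_le_sum fun i hi => ?_
                    have hi' := Finset.mem_range.mp hi
                    exact mul_le_mul_of_nonneg_left (h4 i hi'.le) (v.nonneg _)
                _ = K * R ^ d := by rw [← Finset.sum_mul]
            have h6 : v x ^ d ≤ R ^ d := h4 d le_rfl
            nlinarith
    have hgy : Real.log (max (v (φ.eval x)) 1) ≤ Real.log M := by
      refine Real.log_le_log (by positivity) (max_le ?_ hM1)
      exact le_trans hy (le_max_left _ _)
    have hgy0 : 0 ≤ Real.log (max (v (φ.eval x)) 1) := Real.log_nonneg (le_max_right _ _)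
    have hlogR0 : 0 ≤ Real.log R := Real.log_nonneg hR1
    have hlogM0 : 0 ≤ Real.log M := Real.log_nonneg hM1
    have hCge : Real.log M + d * Real.log R ≤ C := le_max_right _ _
    have hdgx : (d : ℝ) * Real.log (max (v x) 1) ≤ d * Real.log R :=
      mul_le_mul_of_nonneg_left hgxR (Nat.cast_nonneg d)
    have hdgx0 : 0 ≤ (d : ℝ) * Real.log (max (v x) 1) :=
      mul_nonneg (Nat.cast_nonneg d) hgx0
    rw [abs_le]
    constructor
    · linarith
    · linarith
  · -- big case
    have hx1 : 1 < v x := lt_of_le_of_lt hR1 hxR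
    have hgx : max (v x) 1 = v x := max_eq_left hx1.le
    have hy1 : 1 < v (φ.eval x) := lt_of_le_of_lt hR1 (hesc x hxR)
    have hgy : max (v (φ.eval x)) 1 = v (φ.eval x) := max_eq_left hy1.le
    have hlo := hlow x hxR
    have hhi := hup x hx1.le
    have hxpos : 0 < v x := lt_trans zero_lt_one hx1
    have hlog_lo : Real.log (c / 2) + d * Real.log (v x) ≤ Real.log (v (φ.eval x)) := by
      have := Real.log_le_log (by positivity) hlo
      rwa [Real.log_mul (by positivity) (by positivity), Real.log_pow] at this
    have hlog_hi : Real.log (v (φ.eval x)) ≤ Real.log (c + K) + d * Real.log (v x) := by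
      have := Real.log_le_log (by positivity : (0:ℝ) < v (φ.eval x)) hhi
      rwa [Real.log_mul (by positivity) (by positivity), Real.log_pow] at this
    have hCge : |Real.log (c / 2)| + |Real.log (c + K)| ≤ C := le_max_left _ _
    rw [hgx, hgy, abs_le]
    constructor
    · have := neg_abs_le (Real.log (c / 2))
      have := le_abs_self (Real.log (c + K))
      have := abs_nonneg (Real.log (c + K))
      have := abs_nonneg (Real.log (c / 2))
      linarith
    · have := le_abs_self (Real.log (c + K))
      have := abs_nonneg (Real.log (c / 2))
      linarith

theorem local_canonical_height_exists'
    {Cv : Type*} [Field Cv]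
    (v : AbsoluteValue Cv ℝ)
    (φ : Polynomial Cv) (d : ℕ) (hdeg : φ.natDegree = d) (hd : 2 ≤ d) :
    ∃ lam : Cv → ℝ,
      (∀ x : Cv, Tendsto
        (fun n : ℕ => Real.log (max (v ((fun y => φ.eval y)^[n] x)) 1) / (d : ℝ) ^ n)
        atTop (nhds (lam x))) ∧
      (∀ x : Cv, 0 ≤ lam x) ∧
      (∀ x : Cv, lam (φ.eval x) = (d : ℝ) * lam x) ∧
      (∀ x : Cv, lam x = 0 ↔ x ∈ filledJulia v φ) := by
  obtain ⟨C, R, hC0, hR1, hquasi, hesc⟩ := quasi_bound v φ d hdeg hd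
  set F : Cv → Cv := fun y => φ.eval y with hF
  set g : Cv → ℝ := fun x => Real.log (max (v x) 1) with hg
  have hd1 : (1 : ℝ) < d := by exact_mod_cast lt_of_lt_of_le one_lt_two (by exact_mod_cast hd)
  have hd0 : (0 : ℝ) < d := lt_trans zero_lt_one hd1
  have hdne : (d : ℝ) ≠ 0 := ne_of_gt hd0
  set A : Cv → ℕ → ℝ := fun x n => g (F^[n] x) / (d : ℝ) ^ n with hA
  have hg0 : ∀ y : Cv, 0 ≤ g y := fun y => Real.log_nonneg (le_max_right _ _)
  have hstep : ∀ (x : Cv) (n : ℕ), |A x (n + 1) - A x n| ≤ (C / d) * (1 / d) ^ n := by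
    intro x n
    have h1 : A x (n + 1) - A x n
        = (g (F (F^[n] x)) - d * g (F^[n] x)) / (d : ℝ) ^ (n + 1) := by
      rw [hA]
      simp only [Function.iterate_succ_apply']
      field_simp
      ring
    have h2 := hquasi (F^[n] x)
    have h3 : (0 : ℝ) < (d : ℝ) ^ (n + 1) := pow_pos hd0 _
    have h4 : (C / (d : ℝ)) * (1 / d) ^ n = C / (d : ℝ) ^ (n + 1) := by
      rw [div_pow, one_pow, div_mul_div_comm, mul_one, ← pow_succ']
    rw [h1, abs_div, abs_of_pos h3, h4]
    exact (div_le_div_iff_of_pos_right h3).mpr h2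
  have hcauchy : ∀ x : Cv, CauchySeq (A x) := by
    intro x
    refine cauchySeq_of_le_geometric (1 / d) (C / d) (by rw [div_lt_one hd0]; exact hd1) ?_
    intro n
    rw [Real.dist_eq, abs_sub_comm]
    exact hstep x n
  have hlimex : ∀ x : Cv, ∃ L : ℝ, Tendsto (A x) atTop (nhds L) :=
    fun x => cauchySeq_tendsto_of_complete (hcauchy x)
  choose lam hlam using hlimex
  refine ⟨lam, fun x => hlam x, ?_, ?_, ?_⟩
  · intro x
    exact ge_of_tendsto' (hlam x) fun n => div_nonneg (hg0 _) (le_of_lt (pow_pos hd0 n))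
  · intro x
    have h3 : ∀ n : ℕ, A (F x) n = d * A x (n + 1) := by
      intro n
      rw [hA]
      simp only [← Function.iterate_succ_apply]
      rw [pow_succ]
      field_simp
    have h1 : Tendsto (fun n => A x (n + 1)) atTop (nhds (lam x)) :=
      (hlam x).comp (tendsto_add_atTop_nat 1)
    have h2 : Tendsto (fun n => (d : ℝ) * A x (n + 1)) atTop (nhds (d * lam x)) :=
      h1.const_mul _
    exact tendsto_nhds_unique (hlam (F x)) (h2.congr fun n => (h3 n).symm)
  · intro x
    constructor
    · intro hlam0
      by_contra hx
      rw [filledJulia, Set.mem_setOf_eq] at hx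
      push_neg at hx
      obtain ⟨n, hn⟩ := hx (max R (Real.exp (C + 1)))
      have hnR : R < v (F^[n] x) := lt_of_le_of_lt (le_max_left _ _) hn
      have hgn : C + 1 ≤ g (F^[n] x) := by
        have h1 : Real.exp (C + 1) ≤ max (v (F^[n] x)) 1 :=
          le_trans (le_trans (le_max_right _ _) hn.le) (le_max_left _ _)
        calc C + 1 = Real.log (Real.exp (C + 1)) := (Real.log_exp _).symm
          _ ≤ g (F^[n] x) := Real.log_le_log (Real.exp_pos _) h1
      have hclaim : ∀ m : ℕ, R < v (F^[n + m] x) ∧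
          (d : ℝ) ^ m * (g (F^[n] x) - C) ≤ g (F^[n + m] x) - C := by
        intro m
        induction m with
        | zero => simpa using hnR
        | succ m ih =>
          obtain ⟨ih1, ih2⟩ := ih
          have hit : F^[n + (m + 1)] x = F (F^[n + m] x) :=
            Function.iterate_succ_apply' F (n + m) x
          constructor
          · rw [hit]; exact hesc _ ih1
          · have hq := hquasi (F^[n + m] x)
            have hq1 : d * g (F^[n + m] x) - C ≤ g (F (F^[n + m] x)) := by
              have := abs_le.mp hq
              linarith [this.1]
            have hd2 : (2 : ℝ) ≤ (d : ℝ) := by exact_mod_cast hd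
            have h5 : (d : ℝ) * ((d : ℝ) ^ m * (g (F^[n] x) - C))
                ≤ d * (g (F^[n + m] x) - C) :=
              mul_le_mul_of_nonneg_left ih2 (le_of_lt hd0)
            have h6 : (2 : ℝ) * C ≤ (d : ℝ) * C :=
              mul_le_mul_of_nonneg_right hd2 hC0
            rw [hit, pow_succ]
            calc (d : ℝ) ^ m * (d : ℝ) * (g (F^[n] x) - C)
                = (d : ℝ) * ((d : ℝ) ^ m * (g (F^[n] x) - C)) := by ring
              _ ≤ (d : ℝ) * (g (F^[n + m] x) - C) := h5
              _ = (d : ℝ) * g (F^[n + m] x) - (d : ℝ) * C := by ring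
              _ ≤ g (F (F^[n + m] x)) - C := by linarith
      set ε : ℝ := (g (F^[n] x) - C) / (d : ℝ) ^ n with hε_def
      have hεpos : 0 < ε := div_pos (by linarith) (pow_pos hd0 n)
      have hbound : ∀ m : ℕ, ε ≤ A x (m + n) := by
        intro m
        have h1 := (hclaim m).2
        have h2 : (0 : ℝ) < (d : ℝ) ^ (n + m) := pow_pos hd0 _
        have h3 : (d : ℝ) ^ (n + m) = (d : ℝ) ^ n * (d : ℝ) ^ m := pow_add _ _ _
        have h4 : A x (m + n) = g (F^[n + m] x) / (d : ℝ) ^ (n + m) := by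
          rw [hA]
          rw [Nat.add_comm m n]
        rw [h4, hε_def, div_le_div_iff₀ (pow_pos hd0 n) h2, h3]
        have h6 : (0 : ℝ) < (d : ℝ) ^ n := pow_pos hd0 n
        nlinarith [pow_pos hd0 m]
      have h7 : Tendsto (fun m => A x (m + n)) atTop (nhds (lam x)) :=
        (hlam x).comp (tendsto_add_atTop_nat n)
      have h8 : ε ≤ lam x := ge_of_tendsto' h7 hbound
      linarith
    · rintro ⟨B, hB⟩
      have hM1 : (0 : ℝ) < max B 1 := lt_of_lt_of_le zero_lt_one (le_max_right _ _)
      set M : ℝ := Real.log (max B 1) with hM_def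
      have hbound : ∀ n : ℕ, A x n ≤ M * (1 / d) ^ n := by
        intro n
        have h1 : max (v (F^[n] x)) 1 ≤ max B 1 :=
          max_le_max (hB n) le_rfl
        have h2 : g (F^[n] x) ≤ M :=
          Real.log_le_log (by positivity) h1
        rw [hA]
        rw [div_le_iff₀ (pow_pos hd0 n)]
        have h3 : M * (1 / d) ^ n * (d : ℝ) ^ n = M := by
          rw [mul_assoc, ← mul_pow]
          field_simp
          rw [one_pow, mul_one]
        rw [h3]
        exact h2
      have h4 : Tendsto (fun n : ℕ => M * (1 / (d : ℝ)) ^ n) atTop (nhds 0) := by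
        have h5 : Tendsto (fun n : ℕ => (1 / (d : ℝ)) ^ n) atTop (nhds 0) :=
          tendsto_pow_atTop_nhds_zero_of_lt_one (by positivity) (by rw [div_lt_one hd0]; exact hd1)
        simpa using h5.const_mul M
      have h6 : Tendsto (A x) atTop (nhds 0) :=
        squeeze_zero (fun n => div_nonneg (hg0 _) (le_of_lt (pow_pos hd0 n))) hbound h4
      exact tendsto_nhds_unique (hlam x) h6

/-- Let `C_v` be a complete, algebraically closed field with a nontrivial
non-archimedean absolute value, and let `φ ∈ C_v[z]` be a polynomial of degree `d ≥ 2`.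
Then for every `x ∈ C_v` the limit `λ(x) = lim_{n→∞} d^{-n} log max{|φⁿ(x)|, 1}` exists
and is nonnegative; `λ` satisfies `λ(φ(x)) = d·λ(x)`; and `λ(x) = 0` iff `x` lies in the
filled Julia set `𝔎_{φ,v}`. -/
theorem local_canonical_height_exists
    {Cv : Type*} [Field Cv] [IsAlgClosed Cv]
    (v : AbsoluteValue Cv ℝ)
    (hna : IsNonarchimedean v)
    (hnt : ∃ x : Cv, x ≠ 0 ∧ v x ≠ 1)
    (hcomp : SeqComplete v)
    (φ : Polynomial Cv) (d : ℕ) (hdeg : φ.natDegree = d) (hd : 2 ≤ d) :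
    ∃ lam : Cv → ℝ,
      (∀ x : Cv, Tendsto
        (fun n : ℕ => Real.log (max (v ((fun y => φ.eval y)^[n] x)) 1) / (d : ℝ) ^ n)
        atTop (nhds (lam x))) ∧
      (∀ x : Cv, 0 ≤ lam x) ∧
      (∀ x : Cv, lam (φ.eval x) = (d : ℝ) * lam x) ∧
      (∀ x : Cv, lam x = 0 ↔ x ∈ filledJulia v φ) :=
  local_canonical_height_exists' v φ d hdeg hd
end
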